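/- arXiv:2402.00642 — 5 statements merged into one kernel-verified Lean document; each statement's English description precedes it below -/
import Mathlib

section
/- Let λ ∈ [0, 1/2) be a real number, let k, m ≥ 1 be integers, let h(λ) = −λ·log₂λ − (1−λ)·log₂(1−λ) be the binary entropy (with h(0)=0), let τ_λ = ⌈1/(4^{h(λ)} − 1)⌉ and C_{λ,k} = (4^{h(λ)·τ_λ}/τ_λ)^{1/k}. Then for every positive integer n there exists a sequence Σ = (a_1, …, a_n) of elements of ℤ^k with every coordinate of every a_i in the interval [0, C_{λ,k} · m · 4^{h(λ)·n/k}], such that e^m_Σ(A₁) ≠ e^m_Σ(A₂) for all distinct A₁, A₂ ∈ F_{λ,n} with |A₁|, |A₂| ≥ m. -/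
/-- `Fam n l` is the family `F_{λ,n}` of all subsets of `{1,…,n}` of size at most `λ·n`. -/
noncomputable def Fam (n : ℕ) (l : ℝ) : Finset (Finset (Fin n)) :=
  Finset.univ.filter (fun A => (A.card : ℝ) ≤ l * n)

/-- The `m`-th evaluation of the sequence `a` in `ℤ^k` on the subset `A`
(componentwise products); it is `0` when `|A| < m`. -/
def mthEvalVec (n k m : ℕ) (a : Fin n → Fin k → ℤ) (A : Finset (Fin n)) : Fin k → ℤ :=
  fun j => ∑ S ∈ A.powersetCard m, ∏ i ∈ S, a i j

/-- The binary entropy function `h(λ) = −λ log₂ λ − (1−λ) log₂(1−λ)` (with `h(0) = 0`,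
which holds by the convention `log 0 = 0`). -/
noncomputable def binEnt (l : ℝ) : ℝ :=
  -(l * Real.logb 2 l) - (1 - l) * Real.logb 2 (1 - l)

/-- `τ_λ = ⌈1 / (4^{h(λ)} − 1)⌉`. -/
noncomputable def tauEnt (l : ℝ) : ℕ := ⌈1 / ((4 : ℝ) ^ binEnt l - 1)⌉₊

/-- `C_{λ,k} = (4^{h(λ)·τ_λ} / τ_λ)^{1/k}`. -/
noncomputable def Cconst (l : ℝ) (k : ℕ) : ℝ :=
  ((4 : ℝ) ^ (binEnt l * (tauEnt l : ℝ)) / (tauEnt l : ℝ)) ^ (1 / (k : ℝ))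

open Finset Real

lemma lemA (ν D : ℕ) (x : ℝ) (hx : 0 < x) (hx2 : x ≤ 1/2) (hD : (D:ℝ) ≤ x * ν) :
    (∑ c ∈ Finset.range (D+1), (ν.choose c : ℝ)) ≤ (2:ℝ) ^ (binEnt x * ν) := by
  have hx1 : x ≤ 1 - x := by linarith
  have h1x : (0:ℝ) < 1 - x := by linarith
  have hνn : (0:ℝ) ≤ (ν:ℝ) := Nat.cast_nonneg ν
  have hDν : D ≤ ν := by
    have h1 : (D:ℝ) ≤ (ν:ℝ) := by nlinarith
    exact_mod_cast h1
  -- weight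
  set w : ℝ := x ^ D * (1 - x) ^ (ν - D) with hw
  have hwpos : 0 < w := by positivity
  have hterm : ∀ c ∈ Finset.range (D+1), (ν.choose c : ℝ) * w ≤
      (ν.choose c : ℝ) * (x ^ c * (1 - x) ^ (ν - c)) := by
    intro c hc
    have hcD : c ≤ D := Nat.lt_succ_iff.mp (Finset.mem_range.mp hc)
    have hsplit1 : x ^ D = x ^ c * x ^ (D - c) := by
      rw [← pow_add]; congr 1; omega
    have hsplit2 : (1 - x) ^ (ν - c) = (1 - x) ^ (ν - D) * (1 - x) ^ (D - c) := by
      rw [← pow_add]; congr 1; omega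
    have hp : x ^ (D - c) ≤ (1 - x) ^ (D - c) := pow_le_pow_left₀ hx.le hx1 _
    have : w ≤ x ^ c * (1 - x) ^ (ν - c) := by
      rw [hw, hsplit1, hsplit2]
      have h1 : (0:ℝ) ≤ x ^ c := by positivity
      have h2 : (0:ℝ) ≤ (1 - x) ^ (ν - D) := by positivity
      nlinarith [mul_le_mul_of_nonneg_left hp (mul_nonneg h1 h2)]
    have hcn : (0:ℝ) ≤ (ν.choose c : ℝ) := Nat.cast_nonneg _
    nlinarith
  have hbig : ∑ c ∈ Finset.range (D+1), (ν.choose c : ℝ) * (x ^ c * (1 - x) ^ (ν - c)) ≤ 1 := by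
    have hsub : Finset.range (D+1) ⊆ Finset.range (ν+1) := by
      intro c hc; simp only [Finset.mem_range] at *; omega
    have h1 : ∑ c ∈ Finset.range (D+1), (ν.choose c : ℝ) * (x ^ c * (1 - x) ^ (ν - c)) ≤
        ∑ c ∈ Finset.range (ν+1), (ν.choose c : ℝ) * (x ^ c * (1 - x) ^ (ν - c)) := by
      apply Finset.sum_le_sum_of_subset_of_nonneg hsub
      intro c _ _; positivity
    have h2 : ∑ c ∈ Finset.range (ν+1), (ν.choose c : ℝ) * (x ^ c * (1 - x) ^ (ν - c)) = 1 := by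
      have := add_pow x (1 - x) ν
      have hxx : x + (1 - x) = 1 := by ring
      rw [hxx, one_pow] at this
      calc ∑ c ∈ Finset.range (ν+1), (ν.choose c : ℝ) * (x ^ c * (1 - x) ^ (ν - c))
          = ∑ c ∈ Finset.range (ν+1), x ^ c * (1 - x) ^ (ν - c) * (ν.choose c : ℝ) :=
            Finset.sum_congr rfl (fun c _ => by ring)
        _ = 1 := this.symm
    linarith
  have hkey : (∑ c ∈ Finset.range (D+1), (ν.choose c : ℝ)) * w ≤ 1 := by
    rw [Finset.sum_mul]
    exact le_trans (Finset.sum_le_sum hterm) hbig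
  -- now the entropy side
  have hrw : (2:ℝ) ^ (-(binEnt x * ν)) = x ^ (x * ν) * (1 - x) ^ ((1 - x) * ν) := by
    have hsplit : -(binEnt x * ν) = Real.logb 2 x * (x * ν) + Real.logb 2 (1 - x) * ((1 - x) * ν) := by
      simp only [binEnt]; ring
    rw [hsplit, Real.rpow_add (by norm_num : (0:ℝ) < 2)]
    rw [Real.rpow_mul (by norm_num : (0:ℝ) ≤ 2), Real.rpow_mul (by norm_num : (0:ℝ) ≤ 2)]
    rw [Real.rpow_logb (by norm_num) (by norm_num) hx,
        Real.rpow_logb (by norm_num) (by norm_num) h1x]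
  have he0 : (0:ℝ) ≤ x * ν - D := by linarith
  have hw2 : (2:ℝ) ^ (-(binEnt x * ν)) ≤ w := by
    rw [hrw, hw]
    have hx1' : x ^ (x * ν) = x ^ (D:ℝ) * x ^ (x * ν - (D:ℝ)) := by
      rw [← Real.rpow_add hx]; congr 1; ring
    have hcast : ((ν - D : ℕ) : ℝ) = (ν:ℝ) - (D:ℝ) := by
      rw [Nat.cast_sub hDν]
    have hx2' : ((1 - x) ^ (ν - D : ℕ) : ℝ) = (1 - x) ^ ((1 - x) * ν) * (1 - x) ^ (x * ν - (D:ℝ)) := by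
      rw [← Real.rpow_natCast (1 - x) (ν - D), hcast, ← Real.rpow_add h1x]
      congr 1; ring
    rw [hx1', hx2', ← Real.rpow_natCast x D]
    have hle : x ^ (x * ν - (D:ℝ)) ≤ (1 - x) ^ (x * ν - (D:ℝ)) :=
      Real.rpow_le_rpow hx.le hx1 he0
    have p1 : (0:ℝ) < x ^ ((D:ℝ)) := Real.rpow_pos_of_pos hx _
    have p2 : (0:ℝ) < (1 - x) ^ ((1 - x) * ν) := Real.rpow_pos_of_pos h1x _
    have p3 : (0:ℝ) ≤ x ^ (x * ν - (D:ℝ)) := Real.rpow_nonneg hx.le _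
    nlinarith [mul_le_mul_of_nonneg_left hle (mul_nonneg p1.le p2.le)]
  have hwinv : (∑ c ∈ Finset.range (D+1), (ν.choose c : ℝ)) ≤ w⁻¹ := by
    have h1 : (∑ c ∈ Finset.range (D+1), (ν.choose c : ℝ)) ≤ 1 / w := (le_div_iff₀ hwpos).mpr hkey
    rwa [one_div] at h1
  have hpos2 : (0:ℝ) < (2:ℝ) ^ (-(binEnt x * ν)) := Real.rpow_pos_of_pos (by norm_num) _
  have hfin : w⁻¹ ≤ ((2:ℝ) ^ (-(binEnt x * ν)))⁻¹ := by
    exact inv_anti₀ hpos2 hw2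
  have heq : ((2:ℝ) ^ (-(binEnt x * ν)))⁻¹ = (2:ℝ) ^ (binEnt x * ν) := by
    rw [Real.rpow_neg (by norm_num : (0:ℝ) ≤ 2), inv_inv]
  rw [heq] at hfin
  linarith


-- congruence: evaluation depends only on values on A
lemma evalCongr {n k m : ℕ} {a b : Fin n → Fin k → ℤ} {A : Finset (Fin n)}
    (h : ∀ i ∈ A, a i = b i) : mthEvalVec n k m a A = mthEvalVec n k m b A := by
  funext j
  apply Finset.sum_congr rfl
  intro S hS
  have hSA : S ⊆ A := (Finset.mem_powersetCard.mp hS).1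
  exact Finset.prod_congr rfl (fun i hi => by rw [h i (hSA hi)])

-- split off a pivot element
lemma evalSplit {n k : ℕ} (m : ℕ) (hm : 1 ≤ m) (b : Fin n → Fin k → ℤ)
    {A : Finset (Fin n)} {i₀ : Fin n} (hi₀ : i₀ ∈ A) (j : Fin k) :
    mthEvalVec n k m b A j =
      b i₀ j * (∑ S ∈ (A.erase i₀).powersetCard (m - 1), ∏ i ∈ S, b i j) +
        mthEvalVec n k m b (A.erase i₀) j := by
  obtain ⟨mm, rfl⟩ : ∃ mm, m = mm + 1 := ⟨m - 1, by omega⟩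
  have hins : A = insert i₀ (A.erase i₀) := (Finset.insert_erase hi₀).symm
  have hni : i₀ ∉ A.erase i₀ := Finset.notMem_erase _ _
  simp only [mthEvalVec]
  conv_lhs => rw [hins]
  rw [Finset.powersetCard_succ_insert hni]
  have hdisj : Disjoint ((A.erase i₀).powersetCard (mm + 1))
      (((A.erase i₀).powersetCard mm).image (insert i₀)) := by
    rw [Finset.disjoint_left]
    intro S hS hS'
    obtain ⟨T, hT, rfl⟩ := Finset.mem_image.mp hS'
    have h1 : insert i₀ T ⊆ A.erase i₀ := (Finset.mem_powersetCard.mp hS).1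
    exact hni (h1 (Finset.mem_insert_self _ _))
  rw [Finset.sum_union hdisj]
  have himg : ∑ S ∈ ((A.erase i₀).powersetCard mm).image (insert i₀), ∏ i ∈ S, b i j =
      b i₀ j * ∑ S ∈ (A.erase i₀).powersetCard mm, ∏ i ∈ S, b i j := by
    rw [Finset.sum_image, Finset.mul_sum]
    · apply Finset.sum_congr rfl
      intro S hS
      have hSsub : S ⊆ A.erase i₀ := (Finset.mem_powersetCard.mp hS).1
      have : i₀ ∉ S := fun h => hni (hSsub h)
      rw [Finset.prod_insert this]
    · intro S hS T hT hET
      have hSsub : S ⊆ A.erase i₀ := (Finset.mem_powersetCard.mp hS).1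
      have hTsub : T ⊆ A.erase i₀ := (Finset.mem_powersetCard.mp hT).1
      have hiS : i₀ ∉ S := fun h => hni (hSsub h)
      have hiT : i₀ ∉ T := fun h => hni (hTsub h)
      have := congrArg (Finset.erase · i₀) hET
      simpa [Finset.erase_insert hiS, Finset.erase_insert hiT] using this
  rw [himg]
  simp only [Nat.add_sub_cancel]
  ring

lemma pairCount {n' k m : ℕ} (hm : 1 ≤ m) (V : Finset (Fin k → ℤ))
    (hpos : m = 1 ∨ ∀ v ∈ V, ∀ j, 1 ≤ v j)
    (A₁ A₂ : Finset (Fin n')) (hA₁ : m ≤ A₁.card)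
    (i₀ : Fin n') (hi₁ : i₀ ∈ A₁) (hi₂ : i₀ ∉ A₂) [DecidablePred (fun b : Fin n' → Fin k → ℤ => mthEvalVec n' k m b A₁ = mthEvalVec n' k m b A₂)] :
    ((Fintype.piFinset (fun _ : Fin n' => V)).filter
        (fun b => mthEvalVec n' k m b A₁ = mthEvalVec n' k m b A₂)).card ≤ V.card ^ (n' - 1) := by
  classical
  set B : Finset (Fin n') := A₁.erase i₀ with hB
  set t : Finset (Fin n' → Fin k → ℤ) :=
    Fintype.piFinset (fun i : Fin n' => if i = i₀ then ({fun _ => (0:ℤ)} : Finset (Fin k → ℤ)) else V) with ht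
  have hcard : t.card = V.card ^ (n' - 1) := by
    rw [ht, Fintype.card_piFinset]
    rw [← Finset.mul_prod_erase Finset.univ _ (Finset.mem_univ i₀)]
    simp only [if_pos rfl, Finset.card_singleton, one_mul]
    have hcg : ∀ i ∈ Finset.univ.erase i₀,
        ((if i = i₀ then ({fun _ => (0:ℤ)} : Finset (Fin k → ℤ)) else V)).card = V.card := by
      intro i hi; rw [if_neg (Finset.mem_erase.mp hi).1]
    rw [Finset.prod_congr rfl hcg, Finset.prod_const,
      Finset.card_erase_of_mem (Finset.mem_univ i₀), Finset.card_univ, Fintype.card_fin]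
    simp
  rw [← hcard]
  apply Finset.card_le_card_of_injOn (fun b => Function.update b i₀ (fun _ => 0))
  · intro b hb
    rw [Finset.mem_coe, Finset.mem_filter] at hb
    rw [ht, Finset.mem_coe, Fintype.mem_piFinset]
    intro i
    by_cases hii : i = i₀
    · subst hii; simp [Function.update_self]
    · beta_reduce
      rw [if_neg hii, Function.update_of_ne hii]
      exact Fintype.mem_piFinset.mp hb.1 i
  · intro b hb b' hb' heq
    simp only [Finset.coe_filter, Set.mem_setOf_eq] at hb hb'
    obtain ⟨hbΩ, hbcol⟩ := hb
    obtain ⟨hb'Ω, hb'col⟩ := hb'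
    have heq' : Function.update b i₀ (fun _ => 0) = Function.update b' i₀ (fun _ => 0) := heq
    have hoff : ∀ i, i ≠ i₀ → b i = b' i := by
      intro i hi
      have := congrFun heq' i
      rwa [Function.update_of_ne hi, Function.update_of_ne hi] at this
    funext i
    by_cases hii : i = i₀
    · subst hii
      funext j
      -- coefficient
      set c : ℤ := ∑ S ∈ B.powersetCard (m - 1), ∏ i ∈ S, b i j with hc
      have hcc : (∑ S ∈ B.powersetCard (m - 1), ∏ i ∈ S, b' i j) = c := by
        rw [hc]
        apply Finset.sum_congr rfl
        intro S hS
        apply Finset.prod_congr rfl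
        intro i hiS
        have hiB : i ∈ B := (Finset.mem_powersetCard.mp hS).1 hiS
        exact (congrFun (hoff i (Finset.ne_of_mem_erase hiB)) j).symm
      have hcpos : 1 ≤ c := by
        rcases hpos with hm1 | hval
        · subst hm1
          simp [hc, Finset.powersetCard_zero]
        · have hBcard : m - 1 ≤ B.card := by
            rw [hB, Finset.card_erase_of_mem hi₁]; omega
          obtain ⟨S₀, hS₀⟩ := Finset.powersetCard_nonempty.mpr hBcard
          have hterm : ∀ S ∈ B.powersetCard (m - 1), (0:ℤ) ≤ ∏ i ∈ S, b i j := by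
            intro S hS
            apply Finset.prod_nonneg
            intro i hiS
            have : 1 ≤ b i j := hval _ (Fintype.mem_piFinset.mp hbΩ i) j
            omega
          have h1 : (1:ℤ) ≤ ∏ i ∈ S₀, b i j := by
            calc (1:ℤ) = ∏ _i ∈ S₀, 1 := by simp
            _ ≤ ∏ i ∈ S₀, b i j := by
                apply Finset.prod_le_prod
                · intro i _; norm_num
                · intro i _; exact hval _ (Fintype.mem_piFinset.mp hbΩ i) j
          have h2 := Finset.single_le_sum hterm hS₀
          rw [hc]; omega
      -- the linear equations
      have hbeq := congrFun hbcol j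
      have hb'eq := congrFun hb'col j
      rw [evalSplit m hm b hi₁ j] at hbeq
      rw [evalSplit m hm b' hi₁ j] at hb'eq
      have hA₂eq : mthEvalVec n' k m b A₂ j = mthEvalVec n' k m b' A₂ j := by
        rw [evalCongr (a := b) (b := b') (A := A₂)
          (fun i hiA => hoff i (fun hieq => hi₂ (hieq ▸ hiA)))]
      have hBeq : mthEvalVec n' k m b B j = mthEvalVec n' k m b' B j := by
        rw [evalCongr (a := b) (b := b') (A := B)
          (fun i hiB => hoff i (Finset.ne_of_mem_erase hiB))]
      rw [hcc] at hb'eq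
      have : (b i j - b' i j) * c = 0 := by
        rw [← hB] at hbeq hb'eq
        nlinarith [hbeq, hb'eq, hA₂eq, hBeq]
      have := mul_eq_zero.mp this
      rcases this with h | h
      · omega
      · omega
    · exact hoff i hii


set_option maxHeartbeats 2000000 in
theorem stmt12 (k m : ℕ) (hk : 1 ≤ k) (hm : 1 ≤ m) (l : ℝ) (hl0 : 0 ≤ l) (hl : l < 1 / 2) :
    ∀ n : ℕ, 0 < n → ∃ a : Fin n → Fin k → ℤ,
      (∀ i j, 0 ≤ a i j ∧
        (a i j : ℝ) ≤ Cconst l k * m * (4 : ℝ) ^ (binEnt l * n / k)) ∧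
      (∀ A₁ A₂ : Finset (Fin n), A₁ ∈ Fam n l → A₂ ∈ Fam n l → A₁ ≠ A₂ →
        m ≤ A₁.card → m ≤ A₂.card → mthEvalVec n k m a A₁ ≠ mthEvalVec n k m a A₂) := by
  intro n hn
  by_cases hml : (m:ℝ) ≤ l * n
  case neg =>
    refine ⟨fun _ _ => 0, fun i j => ⟨le_refl 0, ?_⟩, fun A₁ A₂ hA₁ hA₂ _ hc₁ _ => ?_⟩
    · have h1 : (0:ℝ) ≤ Cconst l k := by
        unfold Cconst; positivity
      push_cast
      positivity
    · exfalso
      apply hml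
      rw [Fam, Finset.mem_filter] at hA₁
      calc (m:ℝ) ≤ (A₁.card : ℝ) := by exact_mod_cast hc₁
      _ ≤ l * n := hA₁.2
  case pos =>
    classical
    -- basic positivity facts
    have hl0' : 0 < l := by
      rcases eq_or_lt_of_le hl0 with heq | hlt
      · exfalso
        rw [← heq] at hml
        have : (1:ℝ) ≤ (m:ℝ) := by exact_mod_cast hm
        simp at hml
        linarith
      · exact hlt
    have hm1R : (1:ℝ) ≤ (m:ℝ) := by exact_mod_cast hm
    have hln1 : (1:ℝ) ≤ l * n := le_trans hm1R hml
    have h1l : (0:ℝ) < 1 - l := by linarith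
    have hinv2 : (2:ℝ) ≤ l⁻¹ := by
      have h2 : ((1:ℝ)/2)⁻¹ ≤ l⁻¹ := inv_anti₀ hl0' (by linarith)
      norm_num at h2
      linarith
    have hL1 : (1:ℝ) ≤ Real.logb 2 l⁻¹ := by
      rw [Real.le_logb_iff_rpow_le (by norm_num : (1:ℝ) < 2) (by positivity)]
      rw [Real.rpow_one]
      exact hinv2
    have hLpos : (0:ℝ) < Real.logb 2 l⁻¹ := lt_of_lt_of_le one_pos hL1
    have hhl : l * Real.logb 2 l⁻¹ ≤ binEnt l := by
      have h2 : Real.logb 2 (1 - l) ≤ 0 :=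
        Real.logb_nonpos (by norm_num : (1:ℝ) < 2) (by linarith) (by linarith)
      have h3 : (0:ℝ) ≤ -(1 - l) * Real.logb 2 (1 - l) := by nlinarith
      rw [binEnt, Real.logb_inv]
      nlinarith
    have hbl : l ≤ binEnt l := by nlinarith
    have hbpos : 0 < binEnt l := by nlinarith
    have hlog4 : (1:ℝ) ≤ Real.log 4 := by
      have h1 : Real.exp 1 < 4 := lt_trans Real.exp_one_lt_d9 (by norm_num)
      have := (Real.lt_log_iff_exp_lt (by norm_num : (0:ℝ) < 4)).mpr h1
      linarith
    have h4h : 1 + l ≤ (4:ℝ) ^ binEnt l := by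
      rw [Real.rpow_def_of_pos (by norm_num : (0:ℝ) < 4)]
      have h1 : l ≤ Real.log 4 * binEnt l := by nlinarith
      have h2 := Real.add_one_le_exp (Real.log 4 * binEnt l)
      linarith
    have hτ1 : 1 ≤ tauEnt l := by
      rw [tauEnt, Nat.one_le_ceil_iff]
      have : (0:ℝ) < (4:ℝ) ^ binEnt l - 1 := by linarith
      positivity
    have hτR : (0:ℝ) < (tauEnt l : ℝ) := by exact_mod_cast hτ1
    have hτub : (tauEnt l : ℝ) < l⁻¹ + 1 := by
      have h0 : (0:ℝ) < (4:ℝ) ^ binEnt l - 1 := by linarith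
      have h1 : (tauEnt l : ℝ) < 1 / ((4:ℝ) ^ binEnt l - 1) + 1 := by
        rw [tauEnt]
        exact Nat.ceil_lt_add_one (by positivity)
      have h2 : 1 / ((4:ℝ) ^ binEnt l - 1) ≤ 1 / l := by
        apply one_div_le_one_div_of_le hl0'
        linarith
      simp only [one_div] at h1 h2
      linarith
    have hτn : (tauEnt l : ℝ) < (4:ℝ) ^ (binEnt l * n) := by
      have h1 : l⁻¹ + 1 ≤ l⁻¹ * l⁻¹ := by nlinarith
      have h2 : (4:ℝ) ^ (Real.logb 2 l⁻¹) = l⁻¹ * l⁻¹ := by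
        have h4 : (4:ℝ) = 2 * 2 := by norm_num
        rw [h4, Real.mul_rpow (by norm_num) (by norm_num)]
        rw [Real.rpow_logb (by norm_num) (by norm_num) (by positivity)]
      have h3 : Real.logb 2 l⁻¹ ≤ binEnt l * n := by
        have : Real.logb 2 l⁻¹ * 1 ≤ Real.logb 2 l⁻¹ * (l * n) :=
          mul_le_mul_of_nonneg_left hln1 hLpos.le
        nlinarith
      have h4 := Real.rpow_le_rpow_of_exponent_le (by norm_num : (1:ℝ) ≤ 4) h3
      rw [h2] at h4
      linarith
    -- the main quantities
    have hkR : (0:ℝ) < (k:ℝ) := by exact_mod_cast hk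
    set τ : ℕ := tauEnt l with hτdef
    set n' : ℕ := n + τ with hn'def
    have hn'1 : 1 ≤ n' := by omega
    set M : ℝ := Cconst l k * m * (4 : ℝ) ^ (binEnt l * n / k) with hMdef
    set W : ℝ := (4:ℝ) ^ (binEnt l * n' ) / τ with hWdef
    have hτn' : ((τ:ℕ) : ℝ) < (4:ℝ) ^ (binEnt l * n') := by
      have hnn' : (n:ℝ) ≤ (n':ℝ) := by
        rw [hn'def]; push_cast; linarith
      have h1 : binEnt l * n ≤ binEnt l * n' := mul_le_mul_of_nonneg_left hnn' hbpos.le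
      have h2 := Real.rpow_le_rpow_of_exponent_le (by norm_num : (1:ℝ) ≤ 4) h1
      exact lt_of_lt_of_le hτn h2
    have hW1 : (1:ℝ) ≤ W := by
      rw [hWdef, le_div_iff₀ hτR]
      linarith
    have hWpos : (0:ℝ) < W := lt_of_lt_of_le one_pos hW1
    have hMW : M = m * W ^ (1 / (k:ℝ)) := by
      have e1 : (4:ℝ) ^ (binEnt l * n / k) = ((4:ℝ) ^ (binEnt l * (n:ℝ))) ^ (1/(k:ℝ)) := by
        rw [← Real.rpow_mul (by norm_num : (0:ℝ) ≤ 4)]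
        congr 1; ring
      have e2 : Cconst l k * (4:ℝ) ^ (binEnt l * n / k) = W ^ (1/(k:ℝ)) := by
        rw [Cconst, ← hτdef, e1, ← Real.mul_rpow (by positivity) (by positivity)]
        congr 1
        rw [hWdef, div_mul_eq_mul_div, ← Real.rpow_add (by norm_num : (0:ℝ) < 4)]
        congr 2
        rw [hn'def]; push_cast; ring
      rw [hMdef]
      calc Cconst l k * ↑m * (4:ℝ) ^ (binEnt l * ↑n / ↑k)
          = ↑m * (Cconst l k * (4:ℝ) ^ (binEnt l * ↑n / ↑k)) := by ring
        _ = ↑m * W ^ (1/(k:ℝ)) := by rw [e2]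
    have hWk : (W ^ (1 / (k:ℝ))) ^ k = W := by
      rw [← Real.rpow_natCast (W ^ (1 / (k:ℝ))) k, ← Real.rpow_mul hWpos.le]
      rw [one_div_mul_cancel (ne_of_gt hkR), Real.rpow_one]
    have hMm : (m:ℝ) ≤ M := by
      rw [hMW]
      have h1 : (1:ℝ) ≤ W ^ (1 / (k:ℝ)) := by
        rw [Real.rpow_def_of_pos hWpos]
        have hlw : 0 ≤ Real.log W := Real.log_nonneg hW1
        exact Real.one_le_exp (mul_nonneg hlw (by positivity))
      calc (m:ℝ) = ↑m * 1 := by ring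
      _ ≤ ↑m * W ^ (1/(k:ℝ)) := mul_le_mul_of_nonneg_left h1 (by positivity)
    have hMpos : (0:ℝ) < M := lt_of_lt_of_le (by linarith) hMm
    have hMk : M ^ k = (m:ℝ) ^ k * W := by
      rw [hMW, mul_pow, hWk]
    set N : ℕ := ⌊M⌋₊ with hNdef
    have hNM : (N:ℝ) ≤ M := Nat.floor_le hMpos.le
    have hMN1 : M < (N:ℝ) + 1 := Nat.lt_floor_add_one M
    have hNm : m ≤ N := Nat.le_floor hMm
    have hN1 : 1 ≤ N := le_trans hm hNm
    -- grid parameters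
    set lo : ℤ := if m = 1 then 0 else 1 with hlodef
    set g : ℕ := if m = 1 then N + 1 else N with hgdef
    have hg1 : 1 ≤ g := by
      rw [hgdef]; split_ifs <;> omega
    have hgR : (0:ℝ) < (g:ℝ) := by exact_mod_cast hg1
    have hMg : M < (m:ℝ) * (g:ℝ) := by
      rw [hgdef]
      split_ifs with hcase
      · subst hcase
        push_cast
        linarith
      · have hm2 : 2 ≤ m := by omega
        have hm2R : (2:ℝ) ≤ (m:ℝ) := by exact_mod_cast hm2
        have hN2 : 2 ≤ N := le_trans hm2 hNm
        have hN2R : (2:ℝ) ≤ (N:ℝ) := by exact_mod_cast hN2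
        have h1 : M < 2 * (N:ℝ) := by linarith
        have h2 : 2 * (N:ℝ) ≤ (m:ℝ) * (N:ℝ) := mul_le_mul_of_nonneg_right hm2R (by positivity)
        linarith
    -- counting space
    set G : Finset ℤ := Finset.Icc lo (N:ℤ) with hGdef
    have hGcard : G.card = g := by
      rw [hGdef, hlodef, hgdef]
      split_ifs
      · rw [Int.card_Icc]; omega
      · rw [Int.card_Icc]; omega
    set V : Finset (Fin k → ℤ) := Fintype.piFinset (fun _ => G) with hVdef
    have hVcard : V.card = g ^ k := by
      rw [hVdef, Fintype.card_piFinset]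
      rw [Finset.prod_congr rfl (fun j _ => hGcard), Finset.prod_const, Finset.card_univ,
        Fintype.card_fin]
    set Ω : Finset (Fin n' → Fin k → ℤ) := Fintype.piFinset (fun _ => V) with hΩdef
    have hΩcard : Ω.card = (g ^ k) ^ n' := by
      rw [hΩdef, Fintype.card_piFinset]
      rw [Finset.prod_congr rfl (fun j _ => hVcard), Finset.prod_const, Finset.card_univ,
        Fintype.card_fin]
    set family : Finset (Finset (Fin n')) :=
      Finset.univ.filter (fun A => (A.card:ℝ) ≤ l * n ∧ m ≤ A.card) with hfamdef
    set S' : ℕ := family.card with hS'def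
    set pairSet : Finset (Finset (Fin n') × Finset (Fin n')) :=
      (family ×ˢ family).filter (fun p => p.1 ≠ p.2) with hpairdef
    have hpaircard : pairSet.card ≤ S' * S' := by
      calc pairSet.card ≤ (family ×ˢ family).card := Finset.card_filter_le _ _
      _ = S' * S' := by rw [Finset.card_product]
    have hperpair : ∀ p ∈ pairSet,
        (Ω.filter (fun b => mthEvalVec n' k m b p.1 = mthEvalVec n' k m b p.2)).card ≤
          (g ^ k) ^ (n' - 1) := by
      intro p hp
      rw [hpairdef, Finset.mem_filter, Finset.mem_product] at hp
      obtain ⟨⟨hp1, hp2⟩, hpne⟩ := hp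
      rw [hfamdef, Finset.mem_filter] at hp1 hp2
      have hc1 : m ≤ p.1.card := hp1.2.2
      have hc2 : m ≤ p.2.card := hp2.2.2
      have hposV : m = 1 ∨ ∀ v ∈ V, ∀ j, 1 ≤ v j := by
        by_cases hm1 : m = 1
        · exact Or.inl hm1
        · right
          intro v hv j
          have hvj := Fintype.mem_piFinset.mp hv j
          rw [hGdef, Finset.mem_Icc] at hvj
          have hlo1 : lo = 1 := by rw [hlodef, if_neg hm1]
          omega
      rw [hΩdef, ← hVcard]
      by_cases hsub : p.1 ⊆ p.2
      · have hns : ¬ p.2 ⊆ p.1 := by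
          intro hsub2
          exact hpne (Finset.Subset.antisymm hsub hsub2)
        obtain ⟨i₀, hi₀2, hi₀1⟩ := Finset.not_subset.mp hns
        have hbound := pairCount (m := m) (n' := n') hm V hposV p.2 p.1 hc2 i₀ hi₀2 hi₀1
        refine le_trans (le_of_eq ?_) hbound
        congr 1
        apply Finset.filter_congr
        intro b _
        constructor
        · exact Eq.symm
        · exact Eq.symm
      · obtain ⟨i₀, hi₀1, hi₀2⟩ := Finset.not_subset.mp hsub
        exact pairCount (m := m) (n' := n') hm V hposV p.1 p.2 hc1 i₀ hi₀1 hi₀2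
    set badPairs : (Fin n' → Fin k → ℤ) → Finset (Finset (Fin n') × Finset (Fin n')) := fun b =>
      pairSet.filter (fun p => mthEvalVec n' k m b p.1 = mthEvalVec n' k m b p.2) with hbaddef
    -- the entropy bound on the family
    have hnn' : (n:ℝ) ≤ (n':ℝ) := by rw [hn'def]; push_cast; linarith
    have hSreal : (S':ℝ) ≤ (2:ℝ) ^ (binEnt l * n') := by
      set d : ℕ := ⌊l * (n:ℝ)⌋₊ with hddef
      have hfam : S' ≤ ∑ c ∈ Finset.range (d+1), n'.choose c := by
        rw [hS'def]
        have hsub : family ⊆ (Finset.range (d+1)).biUnion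
            (fun c => Finset.powersetCard c (Finset.univ : Finset (Fin n'))) := by
          intro A hA
          rw [hfamdef, Finset.mem_filter] at hA
          rw [Finset.mem_biUnion]
          refine ⟨A.card, ?_, ?_⟩
          · rw [Finset.mem_range]
            have : A.card ≤ d := Nat.le_floor hA.2.1
            omega
          · rw [Finset.mem_powersetCard]
            exact ⟨Finset.subset_univ A, rfl⟩
        calc family.card ≤ _ := Finset.card_le_card hsub
        _ ≤ ∑ c ∈ Finset.range (d+1),
              (Finset.powersetCard c (Finset.univ : Finset (Fin n'))).card :=
            Finset.card_biUnion_le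
        _ = ∑ c ∈ Finset.range (d+1), n'.choose c := by
            apply Finset.sum_congr rfl; intro c _
            rw [Finset.card_powersetCard, Finset.card_univ, Fintype.card_fin]
      have hD : (d:ℝ) ≤ l * (n':ℝ) := by
        have h1 : (d:ℝ) ≤ l * n := Nat.floor_le (by positivity)
        have h2 : l * n ≤ l * n' := mul_le_mul_of_nonneg_left hnn' hl0
        linarith
      have hlemA := lemA n' d l hl0' (le_of_lt hl) hD
      have hcast : (S':ℝ) ≤ (∑ c ∈ Finset.range (d+1), (n'.choose c : ℝ)) := by
        have := hfam
        push_cast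
        exact_mod_cast this
      exact le_trans hcast hlemA
    -- strict counting inequality, real side
    have hfin : (S':ℝ) * (S':ℝ) < (τ:ℝ) * (g:ℝ)^k := by
      have h4eq : (4:ℝ) ^ (binEnt l * n') = (τ:ℝ) * W := by
        rw [hWdef]
        field_simp
      have hS2 : (S':ℝ) * (S':ℝ) ≤ (4:ℝ) ^ (binEnt l * n') := by
        have h44 : (4:ℝ) ^ (binEnt l * n') =
            (2:ℝ)^(binEnt l * n') * (2:ℝ)^(binEnt l * n') := by
          rw [← Real.mul_rpow (by norm_num) (by norm_num)]
          norm_num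
        rw [h44]
        exact mul_le_mul hSreal hSreal (Nat.cast_nonneg _) (Real.rpow_nonneg (by norm_num) _)
      have hWeq : W = (M/(m:ℝ))^k := by
        rw [div_pow, hMk]
        field_simp
      have hMgm : M / (m:ℝ) < (g:ℝ) := by
        rw [div_lt_iff₀ (by positivity : (0:ℝ) < (m:ℝ))]
        calc M < (m:ℝ) * (g:ℝ) := hMg
        _ = (g:ℝ) * (m:ℝ) := by ring
      have hWlt : W < (g:ℝ)^k := by
        rw [hWeq]
        exact pow_lt_pow_left₀ hMgm (by positivity) (by omega)
      calc (S':ℝ)*(S':ℝ) ≤ (τ:ℝ)*W := by rw [← h4eq]; exact hS2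
      _ < (τ:ℝ)*(g:ℝ)^k := by exact mul_lt_mul_of_pos_left hWlt hτR
    -- pigeonhole: find a good b
    have hEx : ∃ b ∈ Ω, (badPairs b).card ≤ τ := by
      by_contra hcon
      push_neg at hcon
      have hsum1 : Ω.card * (τ + 1) ≤ ∑ b ∈ Ω, (badPairs b).card := by
        calc Ω.card * (τ + 1) = ∑ _b ∈ Ω, (τ + 1) := by
              rw [Finset.sum_const, smul_eq_mul]
        _ ≤ ∑ b ∈ Ω, (badPairs b).card :=
              Finset.sum_le_sum (fun b hb => hcon b hb)
      have hswap : ∑ b ∈ Ω, (badPairs b).card =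
          ∑ p ∈ pairSet,
            (Ω.filter (fun b => mthEvalVec n' k m b p.1 = mthEvalVec n' k m b p.2)).card := by
        calc ∑ b ∈ Ω, (badPairs b).card
            = ∑ b ∈ Ω, ∑ p ∈ pairSet,
                (if mthEvalVec n' k m b p.1 = mthEvalVec n' k m b p.2 then 1 else 0) :=
              Finset.sum_congr rfl (fun b _ => by rw [hbaddef]; exact Finset.card_filter _ _)
        _ = ∑ p ∈ pairSet, ∑ b ∈ Ω,
                (if mthEvalVec n' k m b p.1 = mthEvalVec n' k m b p.2 then 1 else 0) :=
              Finset.sum_comm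
        _ = ∑ p ∈ pairSet,
              (Ω.filter (fun b => mthEvalVec n' k m b p.1 = mthEvalVec n' k m b p.2)).card :=
              Finset.sum_congr rfl (fun p _ => (Finset.card_filter _ _).symm)
      have hsum2 : ∑ p ∈ pairSet,
          (Ω.filter (fun b => mthEvalVec n' k m b p.1 = mthEvalVec n' k m b p.2)).card ≤
            S' * S' * (g ^ k) ^ (n' - 1) := by
        calc ∑ p ∈ pairSet,
            (Ω.filter (fun b => mthEvalVec n' k m b p.1 = mthEvalVec n' k m b p.2)).card
            ≤ ∑ _p ∈ pairSet, (g ^ k) ^ (n' - 1) := Finset.sum_le_sum hperpair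
        _ = pairSet.card * (g ^ k) ^ (n' - 1) := by rw [Finset.sum_const, smul_eq_mul]
        _ ≤ S' * S' * (g ^ k) ^ (n' - 1) := Nat.mul_le_mul_right _ hpaircard
      have hkey : (g ^ k) * (τ + 1) ≤ S' * S' := by
        have h3 : Ω.card * (τ+1) ≤ S'*S'*(g^k)^(n'-1) :=
          le_trans hsum1 (le_trans (le_of_eq hswap) hsum2)
        rw [hΩcard] at h3
        have hsplit : (g^k)^n' = (g^k)^(n'-1) * (g^k) := by
          rw [← pow_succ]
          congr 1
          omega
        rw [hsplit] at h3
        have hXpos : 0 < (g^k)^(n'-1) := by positivity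
        have h4 : (g^k * (τ+1)) * (g^k)^(n'-1) ≤ (S'*S') * (g^k)^(n'-1) := by
          calc (g^k * (τ+1)) * (g^k)^(n'-1) = (g^k)^(n'-1) * (g^k) * (τ+1) := by ring
          _ ≤ S'*S'*(g^k)^(n'-1) := h3
          _ = (S'*S') * (g^k)^(n'-1) := by ring
        exact Nat.le_of_mul_le_mul_right h4 hXpos
      have hkeyR : ((g:ℝ))^k * ((τ:ℝ)+1) ≤ (S':ℝ) * (S':ℝ) := by
        exact_mod_cast hkey
      have hgk : (0:ℝ) < (g:ℝ)^k := by positivity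
      nlinarith
    obtain ⟨b, hbΩ, hbbad⟩ := hEx
    -- deletion step
    have hn'pos : 0 < n' := by omega
    set marker : Finset (Fin n') × Finset (Fin n') → Fin n' := fun p =>
      if hp : (p.1 ∪ p.2).Nonempty then (p.1 ∪ p.2).min' hp else ⟨0, hn'pos⟩ with hmarkdef
    set R : Finset (Fin n') := (badPairs b).image marker with hRdef
    have hRcard : R.card ≤ τ := le_trans Finset.card_image_le hbbad
    have hcompl : n ≤ (Finset.univ \ R).card := by
      rw [Finset.card_sdiff_of_subset (Finset.subset_univ R), Finset.card_univ, Fintype.card_fin]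
      omega
    obtain ⟨T, hTsub, hTcard⟩ := Finset.exists_subset_card_eq hcompl
    set emb : Fin n ↪o Fin n' := T.orderEmbOfFin hTcard with hembdef
    have hembT : ∀ i, emb i ∈ T := fun i => Finset.orderEmbOfFin_mem T hTcard i
    refine ⟨fun i j => b (emb i) j, ?_, ?_⟩
    · intro i j
      have hbi := Fintype.mem_piFinset.mp (Fintype.mem_piFinset.mp hbΩ (emb i)) j
      rw [hGdef, Finset.mem_Icc] at hbi
      constructor
      · show (0:ℤ) ≤ b (emb i) j
        have hlo0 : (0:ℤ) ≤ lo := by rw [hlodef]; split_ifs <;> norm_num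
        omega
      · show ((b (emb i) j : ℤ):ℝ) ≤ M
        have h1 : ((b (emb i) j : ℤ):ℝ) ≤ (N:ℝ) := by exact_mod_cast hbi.2
        linarith
    · intro A₁ A₂ hA₁ hA₂ hne hc₁ hc₂ hcol
      have htrans : ∀ A : Finset (Fin n),
          mthEvalVec n k m (fun i j => b (emb i) j) A =
            mthEvalVec n' k m b (A.map emb.toEmbedding) := by
        intro A
        funext j
        simp only [mthEvalVec]
        rw [Finset.powersetCard_map, Finset.sum_map]
        apply Finset.sum_congr rfl
        intro S hS
        simp only [RelEmbedding.coe_toEmbedding, Finset.mapEmbedding_apply]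
        rw [Finset.prod_map]
        rfl
      set p : Finset (Fin n') × Finset (Fin n') :=
        (A₁.map emb.toEmbedding, A₂.map emb.toEmbedding) with hpdef
      have hmemfam : ∀ A : Finset (Fin n), A ∈ Fam n l → m ≤ A.card →
          A.map emb.toEmbedding ∈ family := by
        intro A hA hcA
        rw [hfamdef, Finset.mem_filter]
        rw [Fam, Finset.mem_filter] at hA
        refine ⟨Finset.mem_univ _, ?_, ?_⟩
        · rw [Finset.card_map]; exact hA.2
        · rw [Finset.card_map]; exact hcA
      have hpbad : p ∈ badPairs b := by
        rw [hbaddef]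
        rw [Finset.mem_filter, hpairdef, Finset.mem_filter, Finset.mem_product]
        refine ⟨⟨⟨hmemfam A₁ hA₁ hc₁, hmemfam A₂ hA₂ hc₂⟩, ?_⟩, ?_⟩
        · intro heq
          exact hne (Finset.map_injective emb.toEmbedding heq)
        · show mthEvalVec n' k m b p.1 = mthEvalVec n' k m b p.2
          rw [hpdef]
          simp only
          rw [← htrans A₁, ← htrans A₂]
          exact hcol
      have hA₁ne : (A₁.map emb.toEmbedding).Nonempty := by
        rw [← Finset.card_pos, Finset.card_map]
        omega
      have hune : (p.1 ∪ p.2).Nonempty :=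
        ⟨hA₁ne.choose, Finset.mem_union_left _ hA₁ne.choose_spec⟩
      have hmark : marker p ∈ p.1 ∪ p.2 := by
        rw [hmarkdef]
        simp only
        rw [dif_pos hune]
        exact Finset.min'_mem _ hune
      have hsubT : p.1 ∪ p.2 ⊆ T := by
        apply Finset.union_subset
        · intro x hx
          obtain ⟨a, _, rfl⟩ := Finset.mem_map.mp hx
          exact hembT a
        · intro x hx
          obtain ⟨a, _, rfl⟩ := Finset.mem_map.mp hx
          exact hembT a
      have hinR : marker p ∈ R := by
        rw [hRdef]
        exact Finset.mem_image_of_mem marker hpbad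
      have hTR := hTsub (hsubT hmark)
      rw [Finset.mem_sdiff] at hTR
      exact hTR.2 hinR
end

section
/- For all integers k, m ≥ 1 and every positive integer n there exists a sequence Σ = (a_1, …, a_n) of elements of ℤ^k with every coordinate of every a_i lying in [0, m·4^{n/k}], such that e^m_Σ(A₁) ≠ e^m_Σ(A₂) for all distinct subsets A₁, A₂ ⊆ {1, …, n} with |A₁|, |A₂| ≥ m. -/
open Finset

namespace MvPolynomial

section esymmOn

variable {σ R : Type*} [CommSemiring R]

noncomputable def esymmOn (A : Finset σ) (m : ℕ) : MvPolynomial σ R :=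
  ∑ S ∈ A.powersetCard m, ∏ i ∈ S, X i

lemma eval_esymmOn (x : σ → R) (A : Finset σ) (m : ℕ) :
    eval x (esymmOn A m) = ∑ S ∈ A.powersetCard m, ∏ i ∈ S, x i := by
  simp [esymmOn]

lemma totalDegree_esymmOn_le (A : Finset σ) (m : ℕ) :
    (esymmOn A m : MvPolynomial σ R).totalDegree ≤ m := by
  refine (totalDegree_finsetSum _ _).trans (Finset.sup_le fun S hS => ?_)
  calc (∏ i ∈ S, X i : MvPolynomial σ R).totalDegree
        ≤ ∑ i ∈ S, (X i : MvPolynomial σ R).totalDegree := totalDegree_finsetProd _ _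
    _ ≤ ∑ _ ∈ S, 1 := sum_le_sum fun i _ => by
        simpa [X] using totalDegree_monomial_le (Finsupp.single i 1) (1 : R)
    _ = m := by simpa using (mem_powersetCard.1 hS).2

lemma eval_esymmOn_indicator [DecidableEq σ] (A T : Finset σ) (m : ℕ) :
    eval (fun i => if i ∈ T then 1 else 0) (esymmOn A m : MvPolynomial σ R) =
      (#(A ∩ T)).choose m := by
  have : {S ∈ A.powersetCard m | ∀ i ∈ S, i ∈ T} = (A ∩ T).powersetCard m := by
    ext S
    simp only [mem_filter, mem_powersetCard, subset_inter_iff]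
    tauto
  rw [eval_esymmOn]
  simp_rw [prod_boole]
  rw [sum_boole, this, card_powersetCard]

lemma esymmOn_ne_of_not_subset [Nontrivial R] {A B : Finset σ} {m : ℕ} (hm : m ≠ 0)
    (hAB : ¬A ⊆ B) (hA : m ≤ #A) : (esymmOn A m : MvPolynomial σ R) ≠ esymmOn B m := by
  classical
  obtain ⟨i, hiA, hiB⟩ := not_subset.1 hAB
  obtain ⟨T, hiT, hTA, hT⟩ :=
    exists_subsuperset_card_eq (singleton_subset_iff.2 hiA) (by simpa [Nat.one_le_iff_ne_zero]) hA
  have hBT : #(B ∩ T) < m := hT ▸ card_lt_card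
    ⟨inter_subset_right, fun h => hiB (mem_of_mem_inter_left (h (singleton_subset_iff.1 hiT)))⟩
  intro h
  have := congrArg (eval fun j => if j ∈ T then (1 : R) else 0) h
  rw [eval_esymmOn_indicator, eval_esymmOn_indicator, inter_eq_right.2 hTA, hT, Nat.choose_self,
    Nat.choose_eq_zero_of_lt hBT] at this
  simp at this

lemma esymmOn_ne [Nontrivial R] {A B : Finset σ} {m : ℕ} (hm : m ≠ 0)
    (hAB : A ≠ B) (hA : m ≤ #A) (hB : m ≤ #B) :
    (esymmOn A m : MvPolynomial σ R) ≠ esymmOn B m := by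
  by_cases h : A ⊆ B
  · exact (esymmOn_ne_of_not_subset hm (fun h' => hAB (subset_antisymm h h')) hB).symm
  · exact esymmOn_ne_of_not_subset hm h hA

end esymmOn

lemma card_filter_eval_esymmOn_eq_mul_le {R : Type*} [CommRing R] [IsDomain R] [DecidableEq R]
    {n m : ℕ} {A B : Finset (Fin n)} (hm : m ≠ 0) (hAB : A ≠ B) (hA : m ≤ #A)
    (hB : m ≤ #B) (S : Finset R) :
    #{x ∈ Fintype.piFinset fun _ => S | eval x (esymmOn A m) = eval x (esymmOn B m)} * #S ≤
      m * #S ^ n := by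
  rcases S.eq_empty_or_nonempty with rfl | hS
  · simp
  have hdeg : (esymmOn A m - esymmOn B m : MvPolynomial (Fin n) R).totalDegree ≤ m :=
    (totalDegree_sub _ _).trans (max_le (totalDegree_esymmOn_le A m) (totalDegree_esymmOn_le B m))
  have hSZ := schwartz_zippel_totalDegree (sub_ne_zero.2 (esymmOn_ne hm hAB hA hB)) S
  simp only [map_sub, sub_eq_zero] at hSZ
  rw [div_le_div_iff₀ (by positivity) (by positivity)] at hSZ
  have : (#{x ∈ Fintype.piFinset fun _ => S | eval x (esymmOn A m) = eval x (esymmOn B m)} * #S :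
      ℚ≥0) ≤ m * #S ^ n := hSZ.trans (by gcongr)
  exact_mod_cast this

end MvPolynomial

open MvPolynomial

theorem exists_forall_exists_eval_esymmOn_ne {R : Type*} [CommRing R] [IsDomain R]
    {n k m : ℕ} (hm : m ≠ 0) (S : Finset R) (hS : 4 ^ n * m ^ k < #S ^ k) :
    ∃ c : Fin k → Fin n → R, (∀ j i, c j i ∈ S) ∧
      ∀ A B : Finset (Fin n), A ≠ B → m ≤ #A → m ≤ #B →
        ∃ j, eval (c j) (esymmOn A m) ≠ eval (c j) (esymmOn B m) := by
  classical
  set G := Fintype.piFinset fun _ : Fin n => S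
  set P : Finset (Finset (Fin n) × Finset (Fin n)) :=
    {p | p.1 ≠ p.2 ∧ m ≤ #p.1 ∧ m ≤ #p.2}
  set bad : Finset (Fin n) × Finset (Fin n) → Finset (Fin n → R) := fun p =>
    {x ∈ G | eval x (esymmOn p.1 m) = eval x (esymmOn p.2 m)}
  have hP : #P ≤ 4 ^ n := by
    calc #P ≤ #(univ : Finset (Finset (Fin n) × Finset (Fin n))) := card_le_univ _
      _ = 4 ^ n := by simp [← mul_pow]
  have hcard : #(P.biUnion fun p => Fintype.piFinset fun _ : Fin k => bad p) <
      #(Fintype.piFinset fun _ : Fin k => G) := by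
    refine lt_of_mul_lt_mul_right (a := #S ^ k) ?_ (Nat.zero_le _)
    calc #(P.biUnion fun p => Fintype.piFinset fun _ : Fin k => bad p) * #S ^ k
        ≤ (∑ p ∈ P, #(bad p) ^ k) * #S ^ k := by
          gcongr
          exact card_biUnion_le.trans_eq (by simp)
      _ = ∑ p ∈ P, (#(bad p) * #S) ^ k := by simp [sum_mul, mul_pow]
      _ ≤ ∑ _p ∈ P, (m * #S ^ n) ^ k := by
          refine sum_le_sum fun p hp => Nat.pow_le_pow_left ?_ k
          obtain ⟨hne, hA, hB⟩ := (mem_filter.1 hp).2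
          exact card_filter_eval_esymmOn_eq_mul_le hm hne hA hB S
      _ ≤ 4 ^ n * m ^ k * (#S ^ n) ^ k := by
          rw [sum_const, smul_eq_mul, mul_pow, ← mul_assoc]
          gcongr
      _ < #S ^ k * (#S ^ n) ^ k := by
          refine Nat.mul_lt_mul_of_pos_right hS ?_
          rw [← pow_mul, mul_comm, pow_mul]
          exact pow_pos (Nat.zero_lt_of_lt hS) n
      _ = #(Fintype.piFinset fun _ : Fin k => G) * #S ^ k := by simp [G, mul_comm]
  obtain ⟨c, hcG, hc⟩ := exists_mem_notMem_of_card_lt_card hcard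
  rw [Fintype.mem_piFinset] at hcG
  refine ⟨c, fun j i => Fintype.mem_piFinset.1 (hcG j) i, fun A B hAB hA hB => ?_⟩
  by_contra! h
  exact hc (mem_biUnion.2 ⟨(A, B), mem_filter.2 ⟨mem_univ _, hAB, hA, hB⟩,
    Fintype.mem_piFinset.2 fun j => mem_filter.2 ⟨hcG j, h j⟩⟩)

lemma pow_mul_pow_lt_floor_add_one_pow {k : ℕ} (hk : k ≠ 0) (b n m : ℕ) :
    b ^ n * m ^ k < (⌊(m : ℝ) * b ^ ((n : ℝ) / k)⌋₊ + 1) ^ k := by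
  set x : ℝ := m * b ^ ((n : ℝ) / k)
  have hx : x ^ k = b ^ n * m ^ k := by
    rw [mul_pow, ← Real.rpow_natCast (_ ^ _), ← Real.rpow_mul (Nat.cast_nonneg b),
      div_mul_cancel₀ _ (Nat.cast_ne_zero.2 hk), Real.rpow_natCast, mul_comm]
  have := pow_lt_pow_left₀ (Nat.lt_floor_add_one x) (by positivity) hk
  rw [hx] at this
  exact_mod_cast this

theorem stmt13_general (k m : ℕ) (hk : 1 ≤ k) (hm : 1 ≤ m) (n : ℕ) :
    ∃ a : Fin n → Fin k → ℤ,
      (∀ i j, 0 ≤ a i j ∧ (a i j : ℝ) ≤ (m : ℝ) * (4 : ℝ) ^ ((n : ℝ) / k)) ∧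
      (∀ A₁ A₂ : Finset (Fin n), A₁ ≠ A₂ → m ≤ A₁.card → m ≤ A₂.card →
        mthEvalVec n k m a A₁ ≠ mthEvalVec n k m a A₂) := by
  set M := ⌊(m : ℝ) * 4 ^ ((n : ℝ) / k)⌋₊
  have hS : 4 ^ n * m ^ k < #(Icc (0 : ℤ) M) ^ k := by
    simpa [Int.card_Icc] using pow_mul_pow_lt_floor_add_one_pow (by omega) 4 n m
  obtain ⟨c, hcS, hc⟩ := exists_forall_exists_eval_esymmOn_ne (by omega) _ hS
  refine ⟨fun i j => c j i, fun i j => ?_, fun A₁ A₂ hne h₁ h₂ heq => ?_⟩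
  · obtain ⟨h0, hM⟩ := mem_Icc.1 (hcS j i)
    refine ⟨h0, le_trans ?_ (Nat.floor_le (by positivity))⟩
    exact_mod_cast hM
  · obtain ⟨j, hj⟩ := hc A₁ A₂ hne h₁ h₂
    rw [eval_esymmOn, eval_esymmOn] at hj
    exact hj (congrFun heq j)

theorem stmt13 (k m : ℕ) (hk : 1 ≤ k) (hm : 1 ≤ m) (n : ℕ) (hn : 0 < n) :
    ∃ a : Fin n → Fin k → ℤ,
      (∀ i j, 0 ≤ a i j ∧ (a i j : ℝ) ≤ (m : ℝ) * (4 : ℝ) ^ ((n : ℝ) / k)) ∧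
      (∀ A₁ A₂ : Finset (Fin n), A₁ ≠ A₂ → m ≤ A₁.card → m ≤ A₂.card →
        mthEvalVec n k m a A₁ ≠ mthEvalVec n k m a A₂) :=
  stmt13_general k m hk hm n
end

section
/- Let m ≥ 2 be an integer. For every real δ > 0 there exist arbitrarily large positive integers n for which there is a sequence Σ = (a_1, …, a_n) of integers with every a_i ∈ [0, 2^{(1+δ)n}] such that e^m_Σ(A₁) ≠ e^m_Σ(A₂) for all distinct subsets A₁, A₂ ⊆ {1, …, n} with |A₁|, |A₂| ≥ m. -/
/-!
Take `a i = 2 ^ (K + i) + 1` with `n = 2 ^ j` and `K = m * j + 1`, and write `a i = z i + 1`.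
Expanding, `e^m_a(A) = ∑ₖ C(|A| - k, m - k) · e^k_z(A)`. Every `z i` is divisible by `2 ^ K`, so
modulo `2 ^ K` only `C(|A|, m)` survives; these binomials lie below `2 ^ K` and increase strictly
in `|A| ≥ m`, so the evaluation determines `|A|`. If `|A| = |B|` and `i₀` is the least element of
`A ∆ B`, the terms with `k ≥ 2` differ by a multiple of `2 ^ (2K + i₀)`, whereas the linear
terms differ by `C(|A| - 1, m - 1) · 2 ^ (K + i₀)` times an odd number; as
`0 < C(|A| - 1, m - 1) < 2 ^ K`, this is impossible unless `A = B`. Since `K = m * j + 1 ≤ δ 2 ^ j`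
for large `j`, every entry is at most `2 ^ (K + n) ≤ 2 ^ ((1 + δ) n)`.
-/

/-- The `m`-th evaluation of the integer sequence `a` on the subset `A`:
the sum over all `m`-element subsets of `A` of the product of the entries.
It is `0` when `|A| < m`. -/
def mthEval (n m : ℕ) (a : Fin n → ℤ) (A : Finset (Fin n)) : ℤ :=
  ∑ S ∈ A.powersetCard m, ∏ i ∈ S, a i

open Finset
open scoped symmDiff

theorem Nat.choose_lt_choose_left {x y r : ℕ} (hr : 0 < r) (hrx : r ≤ x) (hxy : x < y) :
    x.choose r < y.choose r := by
  obtain ⟨r, rfl⟩ : ∃ r', r = r' + 1 := ⟨r - 1, by omega⟩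
  obtain ⟨y, rfl⟩ : ∃ y', y = y' + 1 := ⟨y - 1, by omega⟩
  rw [Nat.choose_succ_succ']
  have := Nat.choose_le_choose (r + 1) (Nat.le_of_lt_succ hxy)
  have := Nat.choose_pos (show r ≤ y by omega)
  omega

theorem Nat.choose_lt_of_pow_lt {s r n m N : ℕ} (hs : s ≤ n) (hr : r ≤ m) (hn : 0 < n)
    (h : n ^ m < N) : s.choose r < N :=
  calc s.choose r ≤ s ^ r := Nat.choose_le_pow s r
    _ ≤ n ^ r := Nat.pow_le_pow_left hs r
    _ ≤ n ^ m := Nat.pow_le_pow_right hn hr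
    _ < N := h

section Expansion

variable {α R : Type*}

theorem card_powersetCard_filter_superset [DecidableEq α] {A T : Finset α} {m : ℕ} (hTA : T ⊆ A)
    (hTm : #T ≤ m) :
    #{S ∈ A.powersetCard m | T ⊆ S} = (#A - #T).choose (m - #T) := by
  rw [← card_sdiff_of_subset hTA, ← card_powersetCard]
  refine card_bij' (fun S _ => S \ T) (fun U _ => U ∪ T) ?_ ?_ ?_ ?_
  · intro S hS
    simp only [mem_filter, mem_powersetCard] at hS ⊢
    exact ⟨sdiff_subset_sdiff hS.1.1 le_rfl, by rw [card_sdiff_of_subset hS.2, hS.1.2]⟩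
  · intro U hU
    rw [mem_powersetCard, subset_sdiff] at hU
    simp only [mem_filter, mem_powersetCard]
    refine ⟨⟨union_subset hU.1.1 hTA, ?_⟩, subset_union_right⟩
    rw [card_union_of_disjoint hU.1.2, hU.2, Nat.sub_add_cancel hTm]
  · intro S hS
    exact sdiff_union_of_subset (mem_filter.1 hS).2
  · intro U hU
    exact union_sdiff_cancel_right (subset_sdiff.1 (mem_powersetCard.1 hU).1).2

variable [CommSemiring R]

theorem sum_powersetCard_prod_add_one (A : Finset α) (m : ℕ) (z : α → R) :
    ∑ S ∈ A.powersetCard m, ∏ i ∈ S, (z i + 1) =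
      ∑ k ∈ range (m + 1),
        ((#A - k).choose (m - k) : R) * ∑ T ∈ A.powersetCard k, ∏ i ∈ T, z i := by
  classical
  have hS : ∀ S ∈ A.powersetCard m, ∏ i ∈ S, (z i + 1) =
      ∑ k ∈ range (m + 1), ∑ T ∈ S.powersetCard k, ∏ i ∈ T, z i := by
    intro S hS
    rw [prod_add_one, sum_powerset, (mem_powersetCard.1 hS).2]
  rw [sum_congr rfl hS, sum_comm]
  refine sum_congr rfl fun k hk => ?_
  rw [sum_comm' (t' := A.powersetCard k) (s' := fun T => {S ∈ A.powersetCard m | T ⊆ S})]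
  · rw [mul_sum]
    refine sum_congr rfl fun T hT => ?_
    rw [mem_powersetCard] at hT
    rw [sum_const, nsmul_eq_mul, card_powersetCard_filter_superset hT.1 (by grind), hT.2]
  · intro S T
    simp only [mem_powersetCard, mem_filter]
    grind

theorem sum_powersetCard_prod_add_one_eq {m : ℕ} (hm : 0 < m) (A : Finset α) (z : α → R) :
    ∑ S ∈ A.powersetCard m, ∏ i ∈ S, (z i + 1) =
      ((#A).choose m : R) + ((#A - 1).choose (m - 1) : R) * ∑ i ∈ A, z i +
        ∑ k ∈ range (m - 1), ((#A - (k + 2)).choose (m - (k + 2)) : R) *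
          ∑ T ∈ A.powersetCard (k + 2), ∏ i ∈ T, z i := by
  obtain ⟨m, rfl⟩ : ∃ m', m = m' + 1 := ⟨m - 1, by omega⟩
  rw [sum_powersetCard_prod_add_one, sum_range_succ', sum_range_succ', powersetCard_zero,
    powersetCard_one, sum_map]
  simp only [sum_singleton, prod_empty, Function.Embedding.coeFn_mk, prod_singleton,
    Nat.sub_zero, mul_one, add_tsub_cancel_right, zero_add]
  ring

theorem pow_dvd_sum_powersetCard_prod {A : Finset α} {z : α → R} {d : R}
    (hz : ∀ i ∈ A, d ∣ z i) (k : ℕ) : d ^ k ∣ ∑ T ∈ A.powersetCard k, ∏ i ∈ T, z i := by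
  refine dvd_sum fun T hT => ?_
  rw [mem_powersetCard] at hT
  rw [← hT.2, ← prod_const]
  exact prod_dvd_prod_of_dvd _ _ fun i hi => hz i (hT.1 hi)

theorem mul_dvd_prod_of_two_le_card {T : Finset α} {z : α → R} {x : α} {a b : R} (hx : x ∈ T)
    (hT : 2 ≤ #T) (ha : a ∣ z x) (hb : ∀ i ∈ T, b ∣ z i) : a * b ∣ ∏ i ∈ T, z i := by
  classical
  obtain ⟨y, hy⟩ : (T.erase x).Nonempty := by
    rw [← card_pos, card_erase_of_mem hx]
    omega
  rw [← mul_prod_erase T z hx]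
  exact mul_dvd_mul ha ((hb y (mem_of_mem_erase hy)).trans (dvd_prod_of_mem z hy))

end Expansion

theorem mul_dvd_sum_powersetCard_prod_sub {α R : Type*} [DecidableEq α] [CommRing R]
    {A B : Finset α} {z : α → R} {a b : R} {k : ℕ} (hk : 2 ≤ k) (ha : ∀ i ∈ A ∆ B, a ∣ z i)
    (hb : ∀ i, b ∣ z i) :
    a * b ∣ ∑ T ∈ A.powersetCard k, ∏ i ∈ T, z i - ∑ T ∈ B.powersetCard k, ∏ i ∈ T, z i := by
  have key : ∀ {X Y : Finset α}, (∀ x ∈ X, x ∉ Y → a ∣ z x) →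
      a * b ∣ ∑ T ∈ X.powersetCard k \ Y.powersetCard k, ∏ i ∈ T, z i := by
    intro X Y hXY
    refine dvd_sum fun T hT => ?_
    simp only [mem_sdiff, mem_powersetCard, not_and] at hT
    obtain ⟨x, hxT, hxY⟩ := not_subset.1 fun hTY => hT.2 hTY hT.1.2
    exact mul_dvd_prod_of_two_le_card hxT (hT.1.2 ▸ hk)
      (hXY x (hT.1.1 hxT) hxY) fun i _ => hb i
  rw [← sum_sdiff_sub_sum_sdiff]
  exact dvd_sub (key fun x hA hB => ha x (mem_symmDiff.2 (.inl ⟨hA, hB⟩)))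
    (key fun x hB hA => ha x (mem_symmDiff.2 (.inr ⟨hB, hA⟩)))

theorem mul_dvd_sum_powersetCard_prod_add_one_sub {α R : Type*} [DecidableEq α] [CommRing R]
    {A B : Finset α} {z : α → R} {a b : R} {m : ℕ} (hm : 0 < m) (hcard : #A = #B)
    (ha : ∀ i ∈ A ∆ B, a ∣ z i) (hb : ∀ i, b ∣ z i) :
    a * b ∣ ∑ S ∈ A.powersetCard m, ∏ i ∈ S, (z i + 1) - ∑ S ∈ B.powersetCard m, ∏ i ∈ S, (z i + 1)
      - ((#A - 1).choose (m - 1) : R) * (∑ i ∈ A, z i - ∑ i ∈ B, z i) := by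
  rw [sum_powersetCard_prod_add_one_eq hm, sum_powersetCard_prod_add_one_eq hm, ← hcard]
  have hhigher : ∀ k ∈ range (m - 1), a * b ∣ ((#A - (k + 2)).choose (m - (k + 2)) : R) *
      (∑ T ∈ A.powersetCard (k + 2), ∏ i ∈ T, z i - ∑ T ∈ B.powersetCard (k + 2), ∏ i ∈ T, z i) :=
    fun k _ => dvd_mul_of_dvd_right (mul_dvd_sum_powersetCard_prod_sub (by omega) ha hb) _
  convert dvd_sum hhigher using 1
  simp only [mul_sub, sum_sub_distrib]
  ring

theorem exists_odd_sum_two_pow_sub_sum_two_pow {n : ℕ} {A B : Finset (Fin n)} {i₀ : Fin n}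
    (h₀ : i₀ ∈ A ∆ B) (hmin : ∀ i ∈ A ∆ B, i₀ ≤ i) :
    ∃ u : ℤ, Odd u ∧
      ∑ i ∈ A, (2 : ℤ) ^ (i : ℕ) - ∑ i ∈ B, (2 : ℤ) ^ (i : ℕ) = 2 ^ (i₀ : ℕ) * u := by
  wlog hA : i₀ ∈ A \ B generalizing A B
  · have hBA : i₀ ∈ B \ A := by
      rw [mem_symmDiff] at h₀
      rw [mem_sdiff] at hA ⊢
      tauto
    rw [symmDiff_comm] at h₀ hmin
    obtain ⟨u, hu, h⟩ := this h₀ hmin hBA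
    exact ⟨-u, hu.neg, by linear_combination -h⟩
  have hdvd : ∀ i ∈ A ∆ B, i ≠ i₀ → (2 : ℤ) ^ ((i₀ : ℕ) + 1) ∣ 2 ^ (i : ℕ) := fun i hi hne =>
    pow_dvd_pow 2 (Fin.lt_def.1 (lt_of_le_of_ne (hmin i hi) hne.symm))
  obtain ⟨w, hw⟩ : (2 : ℤ) ^ ((i₀ : ℕ) + 1) ∣
      ∑ i ∈ (A \ B).erase i₀, (2 : ℤ) ^ (i : ℕ) - ∑ i ∈ B \ A, (2 : ℤ) ^ (i : ℕ) := by
    refine dvd_sub (dvd_sum fun i hi => hdvd i ?_ (ne_of_mem_erase hi))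
      (dvd_sum fun i hi => hdvd i ?_ ?_)
    · exact mem_symmDiff.2 (.inl (mem_sdiff.1 (mem_of_mem_erase hi)))
    · exact mem_symmDiff.2 (.inr (mem_sdiff.1 hi))
    · rintro rfl
      exact (mem_sdiff.1 hA).2 (mem_sdiff.1 hi).1
  refine ⟨2 * w + 1, odd_two_mul_add_one w, ?_⟩
  rw [← sum_sdiff_sub_sum_sdiff, ← add_sum_erase _ _ hA]
  linear_combination hw

def shiftedPowTwo (n K : ℕ) (i : Fin n) : ℤ := 2 ^ K * 2 ^ (i : ℕ) + 1

section ShiftedPowTwo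

variable {n m K : ℕ}

theorem mthEval_shiftedPowTwo (A : Finset (Fin n)) :
    mthEval n m (shiftedPowTwo n K) A =
      ∑ S ∈ A.powersetCard m, ∏ i ∈ S, (2 ^ K * 2 ^ (i : ℕ) + 1) :=
  rfl

theorem two_pow_dvd_mthEval_shiftedPowTwo_sub_choose (hm : 0 < m) (A : Finset (Fin n)) :
    (2 : ℤ) ^ K ∣ mthEval n m (shiftedPowTwo n K) A - (#A).choose m := by
  have hz : ∀ i ∈ A, (2 : ℤ) ^ K ∣ 2 ^ K * 2 ^ (i : ℕ) := fun i _ => dvd_mul_right _ _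
  rw [mthEval_shiftedPowTwo, sum_powersetCard_prod_add_one_eq hm, add_assoc, add_sub_cancel_left]
  exact dvd_add (dvd_mul_of_dvd_right (dvd_sum hz) _) (dvd_sum fun k _ => dvd_mul_of_dvd_right
    ((dvd_pow_self _ (by omega)).trans (pow_dvd_sum_powersetCard_prod hz _)) _)

theorem card_eq_of_mthEval_shiftedPowTwo_eq (hm : 0 < m) (hK : n ^ m < 2 ^ K)
    {A B : Finset (Fin n)} (hA : m ≤ #A) (hB : m ≤ #B)
    (h : mthEval n m (shiftedPowTwo n K) A = mthEval n m (shiftedPowTwo n K) B) : #A = #B := by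
  have hn : 0 < n := hm.trans_le (hA.trans (card_le_univ A |>.trans_eq (Fintype.card_fin n)))
  have hlt : ∀ C : Finset (Fin n), (((#C).choose m : ℕ) : ℤ) < 2 ^ K := fun C => by
    exact_mod_cast Nat.choose_lt_of_pow_lt (card_le_univ C |>.trans_eq (Fintype.card_fin n))
      le_rfl hn hK
  have hdvd : (2 : ℤ) ^ K ∣ (#A).choose m - (#B).choose m := by
    have := dvd_sub (two_pow_dvd_mthEval_shiftedPowTwo_sub_choose (K := K) hm B)
      (two_pow_dvd_mthEval_shiftedPowTwo_sub_choose hm A)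
    rwa [h, sub_sub_sub_cancel_left] at this
  have hchoose : (#A).choose m = (#B).choose m := by
    have h0 : ∀ C : Finset (Fin n), (0 : ℤ) ≤ ((#C).choose m : ℕ) := fun _ => Nat.cast_nonneg _
    have := Int.eq_zero_of_abs_lt_dvd hdvd (abs_sub_lt_iff.2
      ⟨by linarith [hlt A, h0 B], by linarith [hlt B, h0 A]⟩)
    exact_mod_cast sub_eq_zero.1 this
  by_contra hne
  rcases Nat.lt_or_gt_of_ne hne with hlt | hlt
  · exact (Nat.choose_lt_choose_left hm hA hlt).ne hchoose
  · exact (Nat.choose_lt_choose_left hm hB hlt).ne hchoose.symm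

theorem eq_of_mthEval_shiftedPowTwo_eq_of_card_eq (hm : 0 < m) {A B : Finset (Fin n)}
    (hA : m ≤ #A) (hC : (#A - 1).choose (m - 1) < 2 ^ K) (hcard : #A = #B)
    (h : mthEval n m (shiftedPowTwo n K) A = mthEval n m (shiftedPowTwo n K) B) : A = B := by
  by_contra hne
  have hD : (A ∆ B).Nonempty := symmDiff_nonempty.2 hne
  set i₀ := (A ∆ B).min' hD
  obtain ⟨u, hu, hsum⟩ := exists_odd_sum_two_pow_sub_sum_two_pow ((A ∆ B).min'_mem hD)
    fun i hi => (A ∆ B).min'_le i hi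
  have hCpos : (0 : ℤ) < ((#A - 1).choose (m - 1) : ℕ) := by
    exact_mod_cast Nat.choose_pos (Nat.sub_le_sub_right hA 1)
  have hClt : (((#A - 1).choose (m - 1) : ℕ) : ℤ) < 2 ^ K := by exact_mod_cast hC
  set C : ℤ := (((#A - 1).choose (m - 1) : ℕ) : ℤ)
  have hdvd : 2 ^ K * 2 ^ (i₀ : ℕ) * 2 ^ K ∣
      mthEval n m (shiftedPowTwo n K) A - mthEval n m (shiftedPowTwo n K) B -
        C * (∑ i ∈ A, 2 ^ K * 2 ^ (i : ℕ) - ∑ i ∈ B, 2 ^ K * 2 ^ (i : ℕ)) :=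
    mul_dvd_sum_powersetCard_prod_add_one_sub hm hcard
      (fun i hi => mul_dvd_mul_left _ (pow_dvd_pow 2 ((A ∆ B).min'_le i hi)))
      (fun i => dvd_mul_right _ _)
  rw [h, sub_self, zero_sub, dvd_neg, ← mul_sum, ← mul_sum, ← mul_sub, hsum,
    show C * (2 ^ K * (2 ^ (i₀ : ℕ) * u)) = 2 ^ K * 2 ^ (i₀ : ℕ) * (C * u) by ring,
    mul_dvd_mul_iff_left (by positivity)] at hdvd
  have hcop : IsCoprime ((2 : ℤ) ^ K) u :=
    (Int.prime_two.coprime_iff_not_dvd.2 (Int.not_even_iff_odd.2 hu ∘ even_iff_two_dvd.2)).pow_left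
  exact hCpos.ne' (Int.eq_zero_of_abs_lt_dvd (hcop.dvd_of_dvd_mul_right hdvd)
    (by rwa [abs_of_pos hCpos]))

theorem injOn_mthEval_shiftedPowTwo (hm : 0 < m) (hK : n ^ m < 2 ^ K) :
    {A : Finset (Fin n) | m ≤ #A}.InjOn (mthEval n m (shiftedPowTwo n K)) := by
  intro A (hA : m ≤ #A) B (hB : m ≤ #B) h
  have hAn : #A ≤ n := card_le_univ A |>.trans_eq (Fintype.card_fin n)
  exact eq_of_mthEval_shiftedPowTwo_eq_of_card_eq hm hA
    (Nat.choose_lt_of_pow_lt (by omega) (Nat.sub_le m 1) (by omega) hK)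
    (card_eq_of_mthEval_shiftedPowTwo_eq hm hK hA hB h) h

theorem shiftedPowTwo_le (i : Fin n) : shiftedPowTwo n K i ≤ 2 ^ (K + n) := by
  have hi : (2 : ℤ) ^ (i : ℕ) < 2 ^ n := pow_lt_pow_right₀ one_lt_two i.isLt
  have hK : (1 : ℤ) ≤ 2 ^ K := one_le_pow₀ one_le_two
  rw [shiftedPowTwo, pow_add]
  nlinarith

theorem shiftedPowTwo_le_two_rpow {δ : ℝ} (hK : (K : ℝ) ≤ δ * n) (i : Fin n) :
    (shiftedPowTwo n K i : ℝ) ≤ 2 ^ ((1 + δ) * n) :=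
  calc (shiftedPowTwo n K i : ℝ) ≤ (2 : ℝ) ^ ((K + n : ℕ) : ℝ) := by
        rw [Real.rpow_natCast]
        exact_mod_cast shiftedPowTwo_le i
    _ ≤ 2 ^ ((1 + δ) * n) :=
        Real.rpow_le_rpow_of_exponent_le one_le_two (by push_cast; linarith)

end ShiftedPowTwo

theorem exists_mul_add_one_le_mul_two_pow (m N : ℕ) {δ : ℝ} (hδ : 0 < δ) :
    ∃ j ≥ N, ((m * j + 1 : ℕ) : ℝ) ≤ δ * 2 ^ j := by
  have hlim := tendsto_pow_const_div_const_pow_of_one_lt 1 one_lt_two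
  obtain ⟨j, hj, hsmall⟩ := ((Filter.eventually_ge_atTop (max N 1)).and
    (hlim.eventually (gt_mem_nhds (div_pos hδ (Nat.cast_add_one_pos m))))).exists
  rw [pow_one, div_lt_div_iff₀ (by positivity) (Nat.cast_add_one_pos m)] at hsmall
  have hj1 : (1 : ℝ) ≤ j := by exact_mod_cast le_of_max_le_right hj
  refine ⟨j, le_of_max_le_left hj, ?_⟩
  push_cast
  nlinarith

theorem stmt16 (m : ℕ) (hm : 2 ≤ m) (δ : ℝ) (hδ : 0 < δ) :
    ∀ N : ℕ, ∃ n : ℕ, N ≤ n ∧ 0 < n ∧ ∃ a : Fin n → ℤ,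
      (∀ i, 0 ≤ a i ∧ (a i : ℝ) ≤ (2 : ℝ) ^ ((1 + δ) * n)) ∧
      (∀ A₁ A₂ : Finset (Fin n), A₁ ≠ A₂ → m ≤ A₁.card → m ≤ A₂.card →
        mthEval n m a A₁ ≠ mthEval n m a A₂) := by
  intro N
  obtain ⟨j, hjN, hj⟩ := exists_mul_add_one_le_mul_two_pow m N hδ
  have hK : (2 ^ j) ^ m < 2 ^ (m * j + 1) := by
    rw [← pow_mul, mul_comm]
    exact Nat.pow_lt_pow_right one_lt_two (Nat.lt_succ_self _)
  refine ⟨2 ^ j, hjN.trans Nat.lt_two_pow_self.le, by positivity,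
    shiftedPowTwo (2 ^ j) (m * j + 1), fun i => ⟨?_, ?_⟩, fun A₁ A₂ hne h₁ h₂ h => ?_⟩
  · unfold shiftedPowTwo
    positivity
  · exact shiftedPowTwo_le_two_rpow (by exact_mod_cast hj) i
  · exact hne (injOn_mthEval_shiftedPowTwo (by omega) hK h₁ h₂ h)
end

section
/- Let N ≥ 1 be an integer, let x_1, x_2, …, x_N be pairwise distinct integers, and let μ be any real number. Then Σ_{i=1}^N (x_i − μ)² ≥ (N³ − N)/12. -/
open Finset

lemma sum_range_real (n : ℕ) : ∑ i ∈ Finset.range n, (i:ℝ) = n*(n-1)/2 := by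
  induction n with
  | zero => simp
  | succ n ih => rw [Finset.sum_range_succ, ih]; push_cast; ring

lemma sum_range_sq_real (n : ℕ) : ∑ i ∈ Finset.range n, (i:ℝ)^2 = n*(n-1)*(2*n-1)/6 := by
  induction n with
  | zero => simp
  | succ n ih => rw [Finset.sum_range_succ, ih]; push_cast; ring

lemma expand_double (n : ℕ) (a : Fin n → ℝ) :
    ∑ i, ∑ j, (a i - a j)^2 = 2*n*(∑ i, (a i)^2) - 2*(∑ i, a i)^2 := by
  have h : ∀ i j : Fin n, (a i - a j)^2 = (a i)^2 - 2*(a i * a j) + (a j)^2 := by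
    intro i j; ring
  simp only [h, Finset.sum_add_distrib, Finset.sum_sub_distrib, Finset.sum_const,
    Finset.card_univ, Fintype.card_fin, nsmul_eq_mul, ← Finset.mul_sum, ← Finset.sum_mul]
  rw [Finset.sum_mul, ← Finset.sum_mul]
  ring_nf

lemma gap_lemma {N : ℕ} {y : Fin N → ℤ} (hy : StrictMono y) :
    ∀ k : ℕ, ∀ i j : Fin N, (j:ℕ) = (i:ℕ) + k → y i + k ≤ y j := by
  intro k
  induction k with
  | zero =>
    intro i j h
    have : i = j := Fin.ext h.symm
    simp [this]
  | succ k ih =>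
    intro i j h
    have hk : (i:ℕ) + k < N := by have := j.isLt; omega
    have h1 := ih i ⟨(i:ℕ) + k, hk⟩ rfl
    have h2 : y ⟨(i:ℕ) + k, hk⟩ < y j := by
      apply hy
      simp only [Fin.lt_def]
      omega
    push_cast
    push_cast at h1
    omega

theorem stmt17 (N : ℕ) (hN : 1 ≤ N) (x : Fin N → ℤ) (hx : Function.Injective x) (μ : ℝ) :
    ((N : ℝ) ^ 3 - (N : ℝ)) / 12 ≤ ∑ i, ((x i : ℝ) - μ) ^ 2 := by
  classical
  set s : Finset ℤ := Finset.image x Finset.univ with hs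
  have hcard : s.card = N := by
    rw [hs, Finset.card_image_of_injective _ hx, Finset.card_univ, Fintype.card_fin]
  set e := s.orderIsoOfFin hcard with he
  set y : Fin N → ℤ := fun i => (e i : ℤ) with hy
  have hymono : StrictMono y := by
    intro i j hij
    exact_mod_cast e.strictMono hij
  -- transport sums from x to y
  have hsum : ∀ g : ℤ → ℝ, ∑ i, g (x i) = ∑ i, g (y i) := by
    intro g
    have h1 : ∑ a ∈ s, g a = ∑ i, g (x i) := by
      rw [hs, Finset.sum_image]
      intro a _ b _ hab
      exact hx hab
    have h2 : ∑ a : s, g (a : ℤ) = ∑ a ∈ s, g a := by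
      rw [← Finset.sum_attach s (fun a => g a)]
      rfl
    have h3 : ∑ i, g (y i) = ∑ a : s, g (a : ℤ) := by
      exact Equiv.sum_comp e.toEquiv (fun a => g (a : ℤ))
    rw [← h1, ← h2, h3]
  -- pointwise bound on squared differences
  have hpt : ∀ i j : Fin N, ((i:ℝ) - (j:ℝ))^2 ≤ ((y i : ℝ) - (y j : ℝ))^2 := by
    intro i j
    have key : ((i:ℤ) - (j:ℤ))^2 ≤ (y i - y j)^2 := by
      rcases le_total i j with hij | hij
      · have hk : (j:ℕ) = (i:ℕ) + ((j:ℕ) - (i:ℕ)) := by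
          have := Fin.le_def.mp hij; omega
        have := gap_lemma hymono ((j:ℕ) - (i:ℕ)) i j hk
        have hc : ((((j:ℕ) - (i:ℕ) : ℕ)) : ℤ) = (j:ℤ) - (i:ℤ) := by
          have := Fin.le_def.mp hij; push_cast; omega
        rw [hc] at this
        nlinarith [this, Fin.le_def.mp hij]
      · have hk : (i:ℕ) = (j:ℕ) + ((i:ℕ) - (j:ℕ)) := by
          have := Fin.le_def.mp hij; omega
        have := gap_lemma hymono ((i:ℕ) - (j:ℕ)) j i hk
        have hc : ((((i:ℕ) - (j:ℕ) : ℕ)) : ℤ) = (i:ℤ) - (j:ℤ) := by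
          have := Fin.le_def.mp hij; push_cast; omega
        rw [hc] at this
        nlinarith [this, Fin.le_def.mp hij]
    exact_mod_cast key
  -- set a i := y i - μ
  set a : Fin N → ℝ := fun i => (y i : ℝ) - μ with ha
  have hdiff : ∀ i j : Fin N, a i - a j = (y i : ℝ) - (y j : ℝ) := by
    intro i j; simp only [ha]; ring
  have hdouble : ∑ i : Fin N, ∑ j : Fin N, ((i:ℝ) - (j:ℝ))^2 ≤ ∑ i, ∑ j, (a i - a j)^2 := by
    apply Finset.sum_le_sum
    intro i _
    apply Finset.sum_le_sum
    intro j _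
    rw [hdiff]
    exact hpt i j
  -- compute ∑∑ (i-j)^2
  have hval : ∑ i : Fin N, ∑ j : Fin N, ((i:ℝ) - (j:ℝ))^2 = (N:ℝ)^2*((N:ℝ)^2-1)/6 := by
    rw [expand_double N (fun i => (i:ℝ))]
    have h1 : ∑ i : Fin N, (i:ℝ) = ∑ i ∈ Finset.range N, (i:ℝ) :=
      Fin.sum_univ_eq_sum_range (fun i => (i:ℝ)) N
    have h2 : ∑ i : Fin N, (i:ℝ)^2 = ∑ i ∈ Finset.range N, (i:ℝ)^2 :=
      Fin.sum_univ_eq_sum_range (fun i => (i:ℝ)^2) N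
    rw [h1, h2, sum_range_real, sum_range_sq_real]
    ring
  rw [hval, expand_double N a] at hdouble
  have hsq : (0:ℝ) ≤ (∑ i, a i)^2 := sq_nonneg _
  have hNpos : (0:ℝ) < N := by exact_mod_cast hN
  have hfinal : (N:ℝ)^2*((N:ℝ)^2-1)/6 + 2*(∑ i, a i)^2 ≤ 2*N*(∑ i, (a i)^2) := by
    linarith
  have hgoal : ((N:ℝ)^3 - N)/12 ≤ ∑ i, (a i)^2 := by
    nlinarith [hfinal, hsq, hNpos]
  have hx2y : ∑ i, ((x i : ℝ) - μ)^2 = ∑ i, (a i)^2 := by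
    have := hsum (fun t => ((t:ℝ) - μ)^2)
    simpa [ha] using this
  rw [hx2y]
  exact hgoal
end

section
/- Fix an integer k ≥ 1 and a real ε > 0. There exists N₀ such that for every N ≥ N₀, every family of N pairwise distinct points z_1, …, z_N ∈ ℤ^k and every μ ∈ ℝ^k satisfy Σ_{i=1}^N ‖z_i − μ‖² ≥ (1 − ε) · (k · Γ(k/2 + 1)^{2/k} / (π · (k+2))) · N^{1 + 2/k}. -/
/-!
Place a unit cube `z + [0,1)^k` at every lattice point `z`. The cubes are disjoint, and the cube
of a point within distance `r` of `μ` lies in the ball of radius `r + √k` about `μ`; comparing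
volumes, at most `ω_k (r + √k)^k` of the points lie within distance `r` of `μ`, where `ω_k` is
the volume of the unit ball. Hence the `i`-th closest point (counting from `1`) is at distance at
least `(i / ω_k)^(1/k) - √k`. Summing the squares of these bounds and comparing
`∑ i^(2/k)` with `∫ x^(2/k)` gives `N^(1 + 2/k) / ((1 + 2/k) ω_k^(2/k)) - O(N^(1 + 1/k))`, and
`((1 + 2/k) ω_k^(2/k))⁻¹ = k Γ(k/2 + 1)^(2/k) / (π (k + 2))`.
-/

open MeasureTheory Metric Finset Real Filter
open scoped ENNReal

noncomputable def unitBallVolume (k : ℕ) : ℝ := √π ^ k / Gamma (k / 2 + 1)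

lemma unitBallVolume_pos (k : ℕ) : 0 < unitBallVolume k :=
  div_pos (pow_pos (sqrt_pos.2 pi_pos) k) (Gamma_pos_of_pos (by positivity))

lemma unitBallVolume_rpow_two_div {k : ℕ} (hk : 0 < k) :
    unitBallVolume k ^ ((2 : ℝ) / k) = π / Gamma (k / 2 + 1) ^ ((2 : ℝ) / k) := by
  rw [unitBallVolume, div_rpow (by positivity) (Gamma_pos_of_pos (by positivity)).le,
    ← rpow_natCast, ← rpow_mul (sqrt_nonneg _), mul_div_cancel₀ _ (by positivity), rpow_two,
    sq_sqrt pi_pos.le]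

section LatticePoints

variable {ι : Type*}

def latticePoint (z : ι → ℤ) : EuclideanSpace ℝ ι := WithLp.toLp 2 fun j => (z j : ℝ)

noncomputable def latticeFloor (x : EuclideanSpace ℝ ι) : ι → ℤ := fun j => ⌊x j⌋

lemma measurable_latticeFloor : Measurable (latticeFloor : EuclideanSpace ℝ ι → ι → ℤ) :=
  measurable_pi_lambda _ fun j => (measurable_pi_apply j).comp (WithLp.measurable_ofLp ..) |>.floor

variable [Fintype ι]

lemma dist_latticePoint_sq (z : ι → ℤ) (μ : EuclideanSpace ℝ ι) :
    dist (latticePoint z) μ ^ 2 = ∑ j, ((z j : ℝ) - μ j) ^ 2 := by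
  simp [EuclideanSpace.dist_eq, latticePoint, Real.dist_eq, sq_abs,
    sq_sqrt (sum_nonneg fun _ _ => sq_nonneg _)]

lemma dist_latticePoint_latticeFloor_le (x : EuclideanSpace ℝ ι) :
    dist x (latticePoint (latticeFloor x)) ≤ √(Fintype.card ι) := by
  rw [EuclideanSpace.dist_eq]
  refine sqrt_le_sqrt ?_
  calc ∑ j, dist (x j) (latticePoint (latticeFloor x) j) ^ 2 ≤ ∑ _j : ι, (1 : ℝ) := by
        refine sum_le_sum fun j _ => ?_
        have h₀ := Int.floor_le (x j)
        have h₁ := Int.lt_floor_add_one (x j)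
        simp only [latticePoint, latticeFloor, PiLp.toLp_apply, Real.dist_eq, sq_abs]
        nlinarith
    _ = Fintype.card ι := by simp

lemma volume_latticeFloor_preimage (z : ι → ℤ) : volume (latticeFloor ⁻¹' {z}) = 1 := by
  have : latticeFloor ⁻¹' {z} =
      WithLp.ofLp ⁻¹' Set.univ.pi fun j => Set.Ico (z j : ℝ) (z j + 1) := by
    ext x
    simp [latticeFloor, funext_iff, Int.floor_eq_iff]
  rw [this, (PiLp.volume_preserving_ofLp ι).measure_preimage
    (MeasurableSet.univ_pi fun _ => measurableSet_Ico).nullMeasurableSet, Real.volume_pi_Ico]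
  simp

lemma card_le_volume_closedBall (S : Finset (ι → ℤ)) (μ : EuclideanSpace ℝ ι) (r : ℝ)
    (hS : ∀ z ∈ S, dist (latticePoint z) μ ≤ r) :
    (#S : ℝ≥0∞) ≤ volume (closedBall μ (r + √(Fintype.card ι))) := by
  calc (#S : ℝ≥0∞) = ∑ z ∈ S, volume (latticeFloor ⁻¹' {z}) := by
        simp [volume_latticeFloor_preimage]
    _ = volume (⋃ z ∈ S, latticeFloor ⁻¹' {z}) :=
        (measure_biUnion_finset (Set.pairwiseDisjoint_fiber _ _)
          fun _ _ => measurable_latticeFloor (measurableSet_singleton _)).symm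
    _ ≤ volume (closedBall μ (r + √(Fintype.card ι))) := by
        refine measure_mono fun x hx => ?_
        simp only [Set.mem_iUnion, Set.mem_preimage, Set.mem_singleton_iff] at hx
        obtain ⟨z, hz, rfl⟩ := hx
        rw [mem_closedBall, add_comm]
        exact (dist_triangle _ _ _).trans
          (add_le_add (dist_latticePoint_latticeFloor_le x) (hS _ hz))

lemma card_le_unitBallVolume_mul [Nonempty ι] (S : Finset (ι → ℤ)) (μ : EuclideanSpace ℝ ι)
    {r : ℝ} (hr : 0 ≤ r) (hS : ∀ z ∈ S, dist (latticePoint z) μ ≤ r) :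
    (#S : ℝ) ≤ unitBallVolume (Fintype.card ι) * (r + √(Fintype.card ι)) ^ Fintype.card ι := by
  have h := card_le_volume_closedBall S μ r hS
  rw [EuclideanSpace.volume_closedBall, ← ENNReal.ofReal_pow (by positivity),
    ← ENNReal.ofReal_mul (by positivity), ← ENNReal.ofReal_natCast,
    ENNReal.ofReal_le_ofReal_iff (by positivity)] at h
  rwa [mul_comm]

end LatticePoints

lemma Tuple.lt_card_filter_le_sort {α : Type*} [LinearOrder α] {N : ℕ} (f : Fin N → α)
    (i : Fin N) : (i : ℕ) < #{j | f j ≤ f (Tuple.sort f i)} := by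
  rw [Nat.lt_iff_add_one_le, ← Fin.card_Iic]
  refine card_le_card_of_injOn (Tuple.sort f) (fun j hj => ?_) (Tuple.sort f).injective.injOn
  simpa using Tuple.monotone_sort f (mem_Iic.1 hj)

lemma rpow_add_one_div_le_sum_range {p : ℝ} (hp : 0 ≤ p) (N : ℕ) :
    (N : ℝ) ^ (p + 1) / (p + 1) ≤ ∑ m ∈ range N, ((m : ℝ) + 1) ^ p := by
  have h := (monotoneOn_rpow_Ici_of_exponent_nonneg hp).mono
    (Set.Icc_subset_Ici_self : Set.Icc (0 : ℝ) (0 + N) ⊆ _) |>.integral_le_sum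
  rw [integral_rpow (Or.inl (by linarith))] at h
  simpa [zero_rpow (by linarith : p + 1 ≠ 0)] using h

lemma sq_sub_two_mul_le_sq {a e s : ℝ} (ha : 0 ≤ a) (h : a ≤ e + s) :
    a ^ 2 - 2 * s * a ≤ e ^ 2 := by
  rcases le_total s a with hsa | has
  · nlinarith [mul_self_le_mul_self (sub_nonneg.2 hsa) (sub_le_iff_le_add.2 h), sq_nonneg s]
  · nlinarith

lemma sum_sq_ge_of_succ_le_pow {k N : ℕ} (hk : 0 < k) {ω s : ℝ} (hω : 0 < ω) (hs : 0 ≤ s)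
    (e : Fin N → ℝ) (he : ∀ i, 0 ≤ e i) (hcount : ∀ i : Fin N, (i + 1 : ℝ) ≤ ω * (e i + s) ^ k) :
    (N : ℝ) ^ (1 + (2 : ℝ) / k) / ((1 + (2 : ℝ) / k) * ω ^ ((2 : ℝ) / k))
      - 2 * s / ω ^ ((1 : ℝ) / k) * (N : ℝ) ^ (1 + (1 : ℝ) / k) ≤ ∑ i, e i ^ 2 := by
  have hk' : (0 : ℝ) < k := Nat.cast_pos.2 hk
  set a : Fin N → ℝ := fun i => (i + 1 : ℝ) ^ ((1 : ℝ) / k) / ω ^ ((1 : ℝ) / k)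
  have ha₀ (i : Fin N) : 0 ≤ a i := by positivity
  have ha (i : Fin N) : a i ≤ e i + s := by
    simp only [a]
    rw [← div_rpow (by positivity) hω.le, one_div, rpow_inv_le_iff_of_pos (by positivity)
      (add_nonneg (he i) hs) hk', rpow_natCast, div_le_iff₀' hω]
    exact hcount i
  have ha_sq (i : Fin N) : a i ^ 2 = (i + 1 : ℝ) ^ ((2 : ℝ) / k) / ω ^ ((2 : ℝ) / k) := by
    have h2 : (2 : ℝ) / k = 1 / k * (2 : ℕ) := by push_cast; ring
    rw [div_pow, h2, rpow_mul_natCast (by positivity), rpow_mul_natCast hω.le]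
  have hsum_sq : (N : ℝ) ^ (1 + (2 : ℝ) / k) / ((1 + (2 : ℝ) / k) * ω ^ ((2 : ℝ) / k))
      ≤ ∑ i, a i ^ 2 := by
    simp only [ha_sq, ← sum_div, Fin.sum_univ_eq_sum_range (fun m => ((m : ℝ) + 1) ^ ((2 : ℝ) / k)),
      ← div_div]
    gcongr
    rw [add_comm]
    exact rpow_add_one_div_le_sum_range (by positivity) N
  have hsum : ∑ i, a i ≤ (N : ℝ) ^ (1 + (1 : ℝ) / k) / ω ^ ((1 : ℝ) / k) := by
    calc ∑ i, a i ≤ ∑ _i : Fin N, (N : ℝ) ^ ((1 : ℝ) / k) / ω ^ ((1 : ℝ) / k) := by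
          refine sum_le_sum fun i _ => ?_
          simp only [a]
          gcongr
          exact_mod_cast i.isLt
      _ = _ := by
          rw [sum_const, card_univ, Fintype.card_fin, nsmul_eq_mul, rpow_add' (by positivity)
            (by positivity), rpow_one, mul_div_assoc]
  calc _ ≤ ∑ i, a i ^ 2 - 2 * s * ∑ i, a i := by
        rw [div_mul_eq_mul_div, mul_div_assoc]
        gcongr
    _ = ∑ i, (a i ^ 2 - 2 * s * a i) := by rw [sum_sub_distrib, mul_sum]
    _ ≤ ∑ i, e i ^ 2 := sum_le_sum fun i _ => sq_sub_two_mul_le_sq (ha₀ i) (ha i)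

lemma succ_le_unitBallVolume_mul_sort {k N : ℕ} (hk : 0 < k) {z : Fin N → Fin k → ℤ}
    (hz : Function.Injective z) (μ : EuclideanSpace ℝ (Fin k)) (i : Fin N) :
    let d := fun j => dist (latticePoint (z j)) μ
    (i + 1 : ℝ) ≤ unitBallVolume k * (d (Tuple.sort d i) + √k) ^ k := by
  intro d
  have : Nonempty (Fin k) := ⟨⟨0, hk⟩⟩
  have hcard := card_le_unitBallVolume_mul
    (({j | d j ≤ d (Tuple.sort d i)} : Finset (Fin N)).image z) μ (r := d (Tuple.sort d i))
    dist_nonneg (by simp [d])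
  rw [card_image_of_injective _ hz, Fintype.card_fin] at hcard
  exact le_trans (by exact_mod_cast Tuple.lt_card_filter_le_sort d i) hcard

theorem sum_sq_dist_lattice_ge {k N : ℕ} (hk : 0 < k) {z : Fin N → Fin k → ℤ}
    (hz : Function.Injective z) (μ : Fin k → ℝ) :
    (N : ℝ) ^ (1 + (2 : ℝ) / k) / ((1 + (2 : ℝ) / k) * unitBallVolume k ^ ((2 : ℝ) / k))
      - 2 * √k / unitBallVolume k ^ ((1 : ℝ) / k) * (N : ℝ) ^ (1 + (1 : ℝ) / k)
      ≤ ∑ i, ∑ j, ((z i j : ℝ) - μ j) ^ 2 := by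
  set d := fun j => dist (latticePoint (z j)) (WithLp.toLp 2 μ)
  have hsum : ∑ i, ∑ j, ((z i j : ℝ) - μ j) ^ 2 = ∑ i, d (Tuple.sort d i) ^ 2 := by
    rw [Equiv.sum_comp (Tuple.sort d) fun i => d i ^ 2]
    simp [d, dist_latticePoint_sq]
  rw [hsum]
  exact sum_sq_ge_of_succ_le_pow hk (unitBallVolume_pos k) (sqrt_nonneg _) _
    (fun _ => dist_nonneg) (succ_le_unitBallVolume_mul_sort hk hz _)

lemma eventually_const_mul_rpow_le {p q : ℝ} (hpq : p < q) (C : ℝ) {δ : ℝ} (hδ : 0 < δ) :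
    ∀ᶠ x : ℝ in atTop, C * x ^ p ≤ δ * x ^ q := by
  filter_upwards [(tendsto_rpow_atTop (sub_pos.2 hpq)).eventually_ge_atTop (C / δ),
    eventually_gt_atTop 0] with x hx hx₀
  have : x ^ q = x ^ (q - p) * x ^ p := by rw [← rpow_add hx₀, sub_add_cancel]
  rw [this, ← mul_assoc]
  exact mul_le_mul_of_nonneg_right ((div_le_iff₀' hδ).1 hx) (rpow_nonneg hx₀.le _)

theorem stmt18 (k : ℕ) (hk : 1 ≤ k) (ε : ℝ) (hε : 0 < ε) :
    ∃ N₀ : ℕ, ∀ N : ℕ, N₀ ≤ N → ∀ z : Fin N → Fin k → ℤ, Function.Injective z →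
      ∀ μ : Fin k → ℝ,
      (1 - ε) * ((k : ℝ) * Real.Gamma ((k : ℝ) / 2 + 1) ^ ((2 : ℝ) / k) /
          (Real.pi * ((k : ℝ) + 2))) * (N : ℝ) ^ (1 + (2 : ℝ) / k) ≤
        ∑ i, ∑ j, ((z i j : ℝ) - μ j) ^ 2 := by
  set c := (k : ℝ) * Gamma ((k : ℝ) / 2 + 1) ^ ((2 : ℝ) / k) / (π * ((k : ℝ) + 2))
  have hc : c = ((1 + (2 : ℝ) / k) * unitBallVolume k ^ ((2 : ℝ) / k))⁻¹ := by
    have := Gamma_pos_of_pos (by positivity : (0 : ℝ) < k / 2 + 1)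
    rw [unitBallVolume_rpow_two_div hk]
    simp only [c]
    field_simp
  have hc₀ : 0 < c := by positivity
  obtain ⟨N₀, hN₀⟩ := eventually_atTop.1 <| tendsto_natCast_atTop_atTop.eventually <|
    eventually_const_mul_rpow_le (by gcongr; norm_num : 1 + (1 : ℝ) / k < 1 + 2 / k)
      (2 * √k / unitBallVolume k ^ ((1 : ℝ) / k)) (mul_pos hε hc₀)
  refine ⟨N₀, fun N hN z hz μ => ?_⟩
  calc (1 - ε) * c * (N : ℝ) ^ (1 + (2 : ℝ) / k)
      ≤ c * (N : ℝ) ^ (1 + (2 : ℝ) / k)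
        - 2 * √k / unitBallVolume k ^ ((1 : ℝ) / k) * (N : ℝ) ^ (1 + (1 : ℝ) / k) := by
        linarith [hN₀ N hN]
    _ ≤ ∑ i, ∑ j, ((z i j : ℝ) - μ j) ^ 2 := by
        rw [hc, inv_mul_eq_div]
        exact sum_sq_dist_lattice_ge hk hz μ
end
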